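/- arXiv:1603.04381 — 6 statements merged into one kernel-verified Lean document; each statement's English description precedes it below -/
import Mathlib

section
/- Let d = 1, let X ⊂ ℝ be a compact convex set, let k ≥ 1, and let (X_1, f(X_1)), …, (X_{t+1}, f(X_{t+1})) be a sample with pairwise distinct values, ordered so that f(X_{(1)}) < ⋯ < f(X_{(t+1)}). Then there exists a continuous function h : X → ℝ with sgn(h(X_i)−h(X_j)) = sgn(f(X_i)−f(X_j)) for all i, j and such that every set {x ∈ X : h(x) ≥ h(x')}, x' ∈ X, is a union of at most k convex sets, if and only if there exists a sequence of classifiers h_1, …, h_{t+1} of the form h_i(x) = Σ_{m=1}^k 1{l_{i,m} ≤ x ≤ u_{i,m}} satisfying (1) h_i(X_{(j)}) = 1{j ≥ i} for all i, j ∈ {1,…,t+1}, and (2) h_1 ≥ h_2 ≥ ⋯ ≥ h_{t+1} pointwise. -/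
open MeasureTheory ProbabilityTheory Set
open scoped ENNReal NNReal BigOperators

noncomputable section

/-- Euclidean space `ℝ^d`. -/
abbrev Euc (d : ℕ) := EuclideanSpace ℝ (Fin d)

/-- The uniform probability measure on a set `s` (w.r.t. the ambient volume measure). -/
def unifOn {E : Type*} [MeasureSpace E] (s : Set E) : Measure E :=
  (volume s)⁻¹ • volume.restrict s

instance unifOn.instIsFiniteMeasure {E : Type*} [MeasureSpace E] (s : Set E) :
    IsFiniteMeasure (unifOn s) := by
  constructor
  rw [unifOn, Measure.smul_apply, Measure.restrict_apply_univ, smul_eq_mul]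
  rcases eq_or_ne (volume s) 0 with h | h
  · simp [h]
  rcases eq_or_ne (volume s) ⊤ with h' | h'
  · simp [h, h']
  · rw [ENNReal.inv_mul_cancel h h']; exact ENNReal.one_lt_top

/-- `f` has a continuous induced ranking rule on `Xset`. -/
def HasContinuousRanking {d : ℕ} (Xset : Set (Euc d)) (f : Euc d → ℝ) : Prop :=
  ∃ h : Euc d → ℝ, ContinuousOn h Xset ∧
    ∀ x ∈ Xset, ∀ x' ∈ Xset, Real.sign (f x - f x') = Real.sign (h x - h x')

/-- `f` has `(c, α)`-regular level sets on `Xset` with unique global maximizer `xs`. -/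
def RegularLevelSets {d : ℕ} (Xset : Set (Euc d)) (f : Euc d → ℝ) (xs : Euc d)
    (c α : ℝ) : Prop :=
  xs ∈ Xset ∧ (∀ x ∈ Xset, f x ≤ f xs) ∧ (∀ x ∈ Xset, f x = f xs → x = xs) ∧
    ∀ x ∈ Xset, ∀ x' ∈ Xset, f x = f x' →
      dist xs x ≤ c * dist xs x' ^ ((1 : ℝ) / (1 + α))

/-- Inner radius of a set. -/
def inradius {d : ℕ} (s : Set (Euc d)) : ℝ :=
  sSup {r : ℝ | 0 < r ∧ ∃ x ∈ s, Metric.closedBall x r ⊆ s}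

/-- A RankOpt-type process: `X 0` is uniform on `Xset` and, conditionally on the history
`(X 0, …, X t)`, the point `X (t+1)` is uniform on a measurable set of positive volume squeezed
between the current upper level set and `Xset`. -/
def IsRankOptProcess {d : ℕ} {Ω : Type*} [MeasurableSpace Ω] (P : Measure Ω)
    [IsFiniteMeasure P] (Xset : Set (Euc d)) (f : Euc d → ℝ) (n : ℕ)
    (X : Fin n → Ω → Euc d) : Prop :=
  (∀ i, Measurable (X i)) ∧
  (∀ h0 : 0 < n, P.map (X ⟨0, h0⟩) = unifOn Xset) ∧
  ∀ (t : ℕ) (ht : t + 1 < n),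
    ∀ᵐ ω ∂P, ∃ A : Set (Euc d), MeasurableSet A ∧ 0 < volume A ∧
      {x ∈ Xset | ∀ i : Fin (t + 1), f (X (Fin.castLE ht.le i) ω) ≤ f x} ⊆ A ∧
      A ⊆ Xset ∧
      condDistrib (X ⟨t + 1, ht⟩)
        (fun ω' => fun i : Fin (t + 1) => X (Fin.castLE ht.le i) ω') P
        (fun i : Fin (t + 1) => X (Fin.castLE ht.le i) ω) = unifOn A

/-- A Pure Adaptive Search: `X 0` is uniform on `Xset` and, conditionally on `X t`,
the point `X (t+1)` is uniform on the upper level set of `f (X t)`. -/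
def IsPureAdaptiveSearch {d : ℕ} {Ω : Type*} [MeasurableSpace Ω] (P : Measure Ω)
    [IsFiniteMeasure P] (Xset : Set (Euc d)) (f : Euc d → ℝ) (n : ℕ)
    (X : Fin n → Ω → Euc d) : Prop :=
  (∀ i, Measurable (X i)) ∧
  (∀ h0 : 0 < n, P.map (X ⟨0, h0⟩) = unifOn Xset) ∧
  ∀ (t : ℕ) (ht : t + 1 < n),
    ∀ᵐ ω ∂P,
      condDistrib (X ⟨t + 1, ht⟩) (X ⟨t, by omega⟩) P (X ⟨t, by omega⟩ ω)
        = unifOn {x ∈ Xset | f (X (⟨t, by omega⟩ : Fin n) ω) ≤ f x}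

/-- Empirical ranking loss of a ranking rule `r` over the sample `x` with values `f ∘ x`. -/
def empLoss {d : ℕ} (f : Euc d → ℝ) {t : ℕ} (x : Fin t → Euc d)
    (r : Euc d → Euc d → ℝ) : ℝ :=
  (2 / ((t : ℝ) * ((t : ℝ) - 1))) * ∑ i : Fin t, ∑ j : Fin t,
    if i < j ∧ r (x i) (x j) ≠ Real.sign (f (x i) - f (x j)) then (1 : ℝ) else 0

/-- Index of the smallest ranking structure of the nested sequence `R` containing a ranking rule
consistent with the sample. -/
def khat {d : ℕ} (f : Euc d → ℝ) (R : ℕ → Set (Euc d → Euc d → ℝ)) {t : ℕ}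
    (x : Fin t → Euc d) : ℕ :=
  sInf {k : ℕ | 1 ≤ k ∧ ∃ r ∈ R k, empLoss f x r = 0}

/-- The exploitation sampling region of AdaRankOpt, given the history `x` and the current best
point `xb`. -/
def adaSet {d : ℕ} (Xset : Set (Euc d)) (f : Euc d → ℝ)
    (R : ℕ → Set (Euc d → Euc d → ℝ)) {t : ℕ} (x : Fin t → Euc d) (xb : Euc d) :
    Set (Euc d) :=
  {y ∈ Xset | ∃ r ∈ R (khat f R x), empLoss f x r = 0 ∧ 0 ≤ r y xb}

/-- Bernoulli measure with parameter `p` on `Bool`. -/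
def bern (p : ℝ) : Measure Bool :=
  ENNReal.ofReal p • Measure.dirac true + ENNReal.ofReal (1 - p) • Measure.dirac false

instance bern.instIsFiniteMeasure (p : ℝ) : IsFiniteMeasure (bern p) := by
  constructor
  rw [bern]
  simp only [Measure.add_apply, Measure.smul_apply, measure_univ, smul_eq_mul, mul_one]
  exact ENNReal.add_lt_top.mpr ⟨ENNReal.ofReal_lt_top, ENNReal.ofReal_lt_top⟩

/-- An AdaRankOpt process with exploration parameter `p` and ranking structures `R`. -/
def IsAdaRankOptProcess {d : ℕ} {Ω : Type*} [MeasurableSpace Ω] (P : Measure Ω)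
    [IsFiniteMeasure P] (Xset : Set (Euc d)) (f : Euc d → ℝ) (p : ℝ)
    (R : ℕ → Set (Euc d → Euc d → ℝ)) (n : ℕ) (X : Fin n → Ω → Euc d) : Prop :=
  ∃ B : Fin n → Ω → Bool,
    (∀ i, Measurable (X i)) ∧ (∀ i, Measurable (B i)) ∧
    (∀ h0 : 0 < n, P.map (X ⟨0, h0⟩) = unifOn Xset) ∧
    ∀ (t : ℕ) (ht : t + 1 < n),
      P.map (B ⟨t + 1, ht⟩) = bern p ∧
      IndepFun (B ⟨t + 1, ht⟩)
        (fun ω => ((fun i : Fin (t + 1) => X (Fin.castLE ht.le i) ω),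
                   (fun i : Fin (t + 1) => B (Fin.castLE ht.le i) ω))) P ∧
      ∃ ihat : Ω → Fin (t + 1), Measurable ihat ∧
        (∀ᵐ ω ∂P, ∀ j : Fin (t + 1),
          f (X (Fin.castLE ht.le j) ω) ≤ f (X (Fin.castLE ht.le (ihat ω)) ω)) ∧
        (∀ᵐ ω ∂P,
          condDistrib (X ⟨t + 1, ht⟩)
            (fun ω' => ((fun i : Fin (t + 1) => X (Fin.castLE ht.le i) ω'),
                        B ⟨t + 1, ht⟩ ω')) P
            ((fun i : Fin (t + 1) => X (Fin.castLE ht.le i) ω), B ⟨t + 1, ht⟩ ω)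
          = if B ⟨t + 1, ht⟩ ω then unifOn Xset
            else unifOn (adaSet Xset f R
                  (fun i : Fin (t + 1) => X (Fin.castLE ht.le i) ω)
                  (X (Fin.castLE ht.le (ihat ω)) ω)))

/-- An AdaRankOpt process indexed by all of `ℕ`. -/
def IsAdaRankOptProcessNat {d : ℕ} {Ω : Type*} [MeasurableSpace Ω] (P : Measure Ω)
    [IsFiniteMeasure P] (Xset : Set (Euc d)) (f : Euc d → ℝ) (p : ℝ)
    (R : ℕ → Set (Euc d → Euc d → ℝ)) (X : ℕ → Ω → Euc d) : Prop :=
  ∃ B : ℕ → Ω → Bool,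
    (∀ i, Measurable (X i)) ∧ (∀ i, Measurable (B i)) ∧
    P.map (X 0) = unifOn Xset ∧
    ∀ t : ℕ,
      P.map (B (t + 1)) = bern p ∧
      IndepFun (B (t + 1))
        (fun ω => ((fun i : Fin (t + 1) => X i ω),
                   (fun i : Fin (t + 1) => B i ω))) P ∧
      ∃ ihat : Ω → Fin (t + 1), Measurable ihat ∧
        (∀ᵐ ω ∂P, ∀ j : Fin (t + 1), f (X j ω) ≤ f (X (ihat ω) ω)) ∧
        (∀ᵐ ω ∂P,
          condDistrib (X (t + 1))
            (fun ω' => ((fun i : Fin (t + 1) => X i ω'), B (t + 1) ω')) P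
            ((fun i : Fin (t + 1) => X i ω), B (t + 1) ω)
          = if B (t + 1) ω then unifOn Xset
            else unifOn (adaSet Xset f R (fun i : Fin (t + 1) => X i ω)
                  (X (ihat ω) ω)))

/-- The true ranking loss `L(r) = P(r(X,X') ≠ r_f(X,X'))` for `X, X'` independent uniform on
`Xset`. -/
def trueLoss {d : ℕ} (Xset : Set (Euc d)) (f : Euc d → ℝ) (r : Euc d → Euc d → ℝ) : ℝ :=
  (((unifOn Xset).prod (unifOn Xset))
    {q : Euc d × Euc d | r q.1 q.2 ≠ Real.sign (f q.1 - f q.2)}).toReal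

/-- The random quantity whose expectation is the Rademacher average of the class `R` given the
ranking rule induced by `f`. -/
def radSupTerm {d : ℕ} (f : Euc d → ℝ) (R : Set (Euc d → Euc d → ℝ)) (n : ℕ)
    (x : Fin n → Euc d) (ε : Fin (n / 2) → Bool) : ℝ :=
  sSup {v : ℝ | ∃ r ∈ R, v =
    (1 / ((n / 2 : ℕ) : ℝ)) * |∑ i : Fin (n / 2),
      (if ε i then (1 : ℝ) else -1) *
      (if r (x ⟨i.1, by have := i.isLt; omega⟩) (x ⟨n / 2 + i.1, by have := i.isLt; omega⟩)
          ≠ Real.sign (f (x ⟨i.1, by have := i.isLt; omega⟩)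
            - f (x ⟨n / 2 + i.1, by have := i.isLt; omega⟩)) then (1 : ℝ) else 0)|}

/-- Expected Rademacher average `E[R_n(R)]` of the class `R` given `r_f`, where the sample is
i.i.d. uniform on `Xset` and the signs are i.i.d. Rademacher. -/
def expRad {d : ℕ} (Xset : Set (Euc d)) (f : Euc d → ℝ)
    (R : Set (Euc d → Euc d → ℝ)) (n : ℕ) : ℝ :=
  ∫ x, (∫ ε, radSupTerm f R n x ε ∂(Measure.pi fun _ : Fin (n / 2) => bern (1 / 2)))
    ∂(Measure.pi fun _ : Fin n => unifOn Xset)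

/-- Index type for the non-constant monomials of degree at most `k` in `d` variables. -/
def MonIdx (d k : ℕ) :=
  {a : Fin d → Fin (k + 1) // 1 ≤ ∑ i, (a i : ℕ) ∧ ∑ i, (a i : ℕ) ≤ k}

instance (d k : ℕ) : Fintype (MonIdx d k) := by unfold MonIdx; infer_instance

/-- The monomial feature `x ↦ ∏ i, x i ^ a i`, a coordinate of the polynomial feature map
`Φ_k`. -/
def monFeature {d k : ℕ} (a : MonIdx d k) (x : Fin d → ℝ) : ℝ :=
  ∏ i, x i ^ ((a.1 i : ℕ))

end

/-!
The level set `{h ≥ h (X i)}` contains the sample points `X j` with `j ≥ i` and none of the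
others. Split those points into runs, the maximal groups that no `X j` with `j < i` separates.
A convex piece of the level set meets at most one run and every run meets some piece, so there
are at most `k` runs; their convex hulls are disjoint intervals that give the `i`-th classifier.
As `i` grows, there are fewer points to cover and more points to avoid, so the unions of these
intervals shrink.

Conversely, let `U i` be the union of the intervals of the `i`-th classifier. These sets decrease,
and `x ↦ maxᵢ (i + 1 - M · dist (x, U i))` with a steep slope `M` takes the value `j + 1`
at `X j`. An upper level set of this function is a union of widened intervals of the `U i` with
`i ≥ i₀`. Each of them hangs on one of the `k` intervals of `U i₀`, so the level set is a union
of `k` convex sets.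
-/

open Function Metric Filter

theorem sign_sub_eq_of_strictMono {ι : Type*} [LinearOrder ι] {a b : ι → ℝ} (ha : StrictMono a)
    (hb : StrictMono b) (i j : ι) : Real.sign (a i - a j) = Real.sign (b i - b j) := by
  rcases lt_trichotomy i j with hij | rfl | hij
  · rw [Real.sign_of_neg (sub_neg.2 (ha hij)), Real.sign_of_neg (sub_neg.2 (hb hij))]
  · simp
  · rw [Real.sign_of_pos (sub_pos.2 (ha hij)), Real.sign_of_pos (sub_pos.2 (hb hij))]

theorem strictMono_of_sign_sub_eq {ι : Type*} [LinearOrder ι] {a b : ι → ℝ} (hb : StrictMono b)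
    (h : ∀ i j, Real.sign (a i - a j) = Real.sign (b i - b j)) : StrictMono a := by
  intro i j hij
  have hsign := h i j
  rw [Real.sign_of_neg (sub_neg.2 (hb hij))] at hsign
  refine sub_neg.1 (lt_of_le_of_ne ?_ fun h0 => by simp [h0] at hsign)
  simpa [hsign] using Real.sign_mul_nonneg (a i - a j)

theorem sum_ite_mem_Icc_eq_indicator {ι α : Type*} [Fintype ι] [LinearOrder α] {l u : ι → α}
    (h : Pairwise (Disjoint on fun m => Icc (l m) (u m))) (x : α) :
    (∑ m, if l m ≤ x ∧ x ≤ u m then (1 : ℝ) else 0) = (⋃ m, Icc (l m) (u m)).indicator 1 x := by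
  simpa [indicator_apply] using
    (Finset.indicator_biUnion_apply Finset.univ _ (h.set_pairwise _) x (f := (1 : α → ℝ))).symm

theorem sum_ite_mem_Icc_pos_iff {ι α : Type*} [Fintype ι] [LinearOrder α] {l u : ι → α} {x : α} :
    0 < (∑ m, if l m ≤ x ∧ x ≤ u m then (1 : ℝ) else 0) ↔ x ∈ ⋃ m, Icc (l m) (u m) := by
  rw [Finset.sum_pos_iff_of_nonneg fun _ _ => by positivity]
  simp only [Finset.mem_univ, true_and, mem_iUnion, mem_Icc]
  exact exists_congr fun m => by split_ifs <;> simp [*]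

theorem exists_pairwise_disjoint_iUnion_eq_of_eq_or_disjoint {α ι : Type*} [LinearOrder ι]
    [WellFoundedLT ι] (s : ι → Set α) (hs : ∀ i j, s i = s j ∨ Disjoint (s i) (s j)) :
    ∃ s' : ι → Set α, (∀ i, s' i = ∅ ∨ s' i = s i) ∧ Pairwise (Disjoint on s') ∧
      ⋃ i, s' i = ⋃ i, s i := by
  classical
  refine ⟨fun i => if ∃ j < i, s j = s i then ∅ else s i,
    fun i => by dsimp only; split_ifs <;> simp, fun i j hij => ?_, ?_⟩
  · wlog hlt : i < j generalizing i j
    · exact (this j i hij.symm (hij.symm.lt_of_le (not_lt.1 hlt))).symm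
    rcases hs i j with heq | hdisj
    · simp only [onFun, if_pos (⟨i, hlt, heq⟩ : ∃ k < j, s k = s j), disjoint_empty]
    · simp only [onFun]
      split_ifs <;> simp [hdisj]
  · refine subset_antisymm (iUnion_mono fun i => by split_ifs <;> simp)
      (iUnion_subset fun i => ?_)
    induction i using WellFoundedLT.induction with
    | _ i ih =>
      by_cases h : ∃ j < i, s j = s i
      · obtain ⟨j, hj, hji⟩ := h
        exact hji ▸ ih j hj
      · exact subset_iUnion_of_subset i (by rw [if_neg h])

section Intervals

variable {α : Type*} [LinearOrder α]

theorem ordConnected_union_iUnion_of_inter_nonempty {ι : Sort*} {J : Set α} {S : ι → Set α}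
    (hJ : J.OrdConnected) (hS : ∀ i, (S i).OrdConnected) (hmeet : ∀ i, (S i ∩ J).Nonempty) :
    (J ∪ ⋃ i, S i).OrdConnected := by
  have reach : ∀ x ∈ J ∪ ⋃ i, S i,
      ∃ T ⊆ J ∪ ⋃ i, S i, T.OrdConnected ∧ x ∈ T ∧ (T ∩ J).Nonempty := by
    rintro x (hx | hx)
    · exact ⟨J, subset_union_left, hJ, hx, x, hx, hx⟩
    · obtain ⟨i, hi⟩ := mem_iUnion.1 hx
      exact ⟨S i, (subset_iUnion S i).trans subset_union_right, hS i, hi, hmeet i⟩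
  refine ⟨fun x hx y hy z hz => ?_⟩
  obtain ⟨Tx, hTx, hTxc, hxT, wx, hwxT, hwxJ⟩ := reach x hx
  obtain ⟨Ty, hTy, hTyc, hyT, wy, hwyT, hwyJ⟩ := reach y hy
  rcases lt_or_ge z wx with hzx | hzx
  · exact hTx (hTxc.out hxT hwxT ⟨hz.1, hzx.le⟩)
  rcases le_or_gt z wy with hzy | hzy
  · exact Or.inl (hJ.out hwxJ hwyJ ⟨hzx, hzy⟩)
  · exact hTy (hTyc.out hwyT hyT ⟨hzy.le, hz.2⟩)

theorem exists_ordConnected_iUnion_eq_of_inter_nonempty {ι κ : Type*} (T : ι → Set α)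
    (J : κ → Set α) (hT : ∀ p, (T p).OrdConnected) (hJ : ∀ m, (J m).OrdConnected)
    (hmeet : ∀ p, ∃ m, (T p ∩ J m).Nonempty) (hJT : ⋃ m, J m ⊆ ⋃ p, T p) :
    ∃ C : κ → Set α, (∀ m, (C m).OrdConnected) ∧ ⋃ m, C m = ⋃ p, T p := by
  choose σ hσ using hmeet
  refine ⟨fun m => J m ∪ ⋃ p : {p // σ p = m}, T p, fun m => ?_, ?_⟩
  · exact ordConnected_union_iUnion_of_inter_nonempty (hJ m) (fun p => hT p)
      fun ⟨p, hp⟩ => hp ▸ hσ p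
  · refine subset_antisymm (iUnion_subset fun m => union_subset ?_ ?_) ?_
    · exact (subset_iUnion J m).trans hJT
    · exact iUnion_subset fun p => subset_iUnion T p
    · exact iUnion_subset fun p =>
        (subset_iUnion_of_subset ⟨p, rfl⟩ subset_rfl).trans (subset_union_right.trans
          (subset_iUnion (fun m => J m ∪ ⋃ p : {p // σ p = m}, T p) (σ p)))

end Intervals

section Runs

variable {α : Type*} [LinearOrder α] {A B : Set α} {a a' b c x : α}

def runHull (A B : Set α) (a : α) : Set α :=
  {x | ∃ b ∈ A, x ∈ uIcc a b ∧ Disjoint (uIcc a b) B}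

theorem disjoint_uIcc_trans (hab : Disjoint (uIcc a b) B) (hbc : Disjoint (uIcc b c) B) :
    Disjoint (uIcc a c) B :=
  (disjoint_union_left.2 ⟨hab, hbc⟩).mono_left uIcc_subset_uIcc_union_uIcc

theorem self_mem_runHull (ha : a ∈ A) (haB : a ∉ B) : a ∈ runHull A B a :=
  ⟨a, ha, left_mem_uIcc, by rwa [uIcc_self, disjoint_singleton_left]⟩

theorem disjoint_uIcc_of_mem_runHull (hx : x ∈ runHull A B a) : Disjoint (uIcc a x) B :=
  let ⟨_, _, hxb, hb⟩ := hx
  hb.mono_left (uIcc_subset_uIcc_left hxb)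

theorem runHull_subset_runHull (ha : a ∈ A) (h : Disjoint (uIcc a' a) B) :
    runHull A B a ⊆ runHull A B a' := by
  rintro x ⟨b, hb, hxb, hbB⟩
  rcases uIcc_subset_uIcc_union_uIcc (b := a') hxb with hx | hx
  · exact ⟨a, ha, uIcc_comm a a' ▸ hx, h⟩
  · exact ⟨b, hb, hx, disjoint_uIcc_trans h hbB⟩

theorem runHull_eq_runHull (ha : a ∈ A) (ha' : a' ∈ A) (h : Disjoint (uIcc a a') B) :
    runHull A B a = runHull A B a' :=
  (runHull_subset_runHull ha (uIcc_comm a a' ▸ h)).antisymm (runHull_subset_runHull ha' h)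

theorem runHull_eq_or_disjoint (ha : a ∈ A) (ha' : a' ∈ A) :
    runHull A B a = runHull A B a' ∨ Disjoint (runHull A B a) (runHull A B a') := by
  refine or_iff_not_imp_right.2 fun h => ?_
  obtain ⟨x, hx, hx'⟩ := not_disjoint_iff.1 h
  exact runHull_eq_runHull ha ha' (disjoint_uIcc_trans (disjoint_uIcc_of_mem_runHull hx)
    (uIcc_comm a' x ▸ disjoint_uIcc_of_mem_runHull hx'))

theorem ordConnected_runHull : (runHull A B a).OrdConnected := by
  refine ordConnected_of_uIcc_subset_left (x := a) fun x ⟨b, hb, hxb, hbB⟩ z hz => ?_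
  exact ⟨b, hb, uIcc_subset_uIcc_left hxb hz, hbB⟩

theorem isCompact_runHull [TopologicalSpace α] [CompactIccSpace α] (hA : A.Finite) :
    IsCompact (runHull A B a) := by
  have : runHull A B a = ⋃ b ∈ {b ∈ A | Disjoint (uIcc a b) B}, uIcc a b := by
    ext x; simp only [runHull, mem_ofPred_eq, mem_iUnion, exists_prop]; grind
  rw [this]
  exact (hA.subset (sep_subset _ _)).isCompact_biUnion fun _ _ => isCompact_uIcc

theorem mem_biUnion_runHull_iff (hAB : Disjoint A B) (hx : x ∈ A ∪ B) :
    x ∈ ⋃ a ∈ A, runHull A B a ↔ x ∈ A := by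
  refine ⟨fun h => ?_, fun h => mem_biUnion h (self_mem_runHull h (hAB.notMem_of_mem_left h))⟩
  obtain ⟨a, -, b, -, hxab, hB⟩ := mem_iUnion₂.1 h
  exact hx.resolve_right (hB.notMem_of_mem_left hxab)

theorem biUnion_runHull_mono {A' B' : Set α} (hA : A ⊆ A') (hB : B' ⊆ B) :
    ⋃ a ∈ A, runHull A B a ⊆ ⋃ a ∈ A', runHull A' B' a :=
  biUnion_mono hA fun _ _ _ ⟨b, hb, hxb, hbB⟩ => ⟨b, hA hb, hxb, hbB.mono_right hB⟩

end Runs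

section OrderTopology

variable {α : Type*} [ConditionallyCompleteLinearOrder α] [TopologicalSpace α] [OrderTopology α]
  [DenselyOrdered α] [Nontrivial α]

theorem exists_eq_Icc_of_isCompact_of_ordConnected {s : Set α} (hs : IsCompact s)
    (hs' : s.OrdConnected) : ∃ l u : α, s = Icc l u := by
  rcases s.eq_empty_or_nonempty with rfl | hne
  · obtain ⟨a, b, hab⟩ := exists_pair_lt α
    exact ⟨b, a, (Icc_eq_empty hab.not_ge).symm⟩
  · exact ⟨_, _, eq_Icc_of_connected_compact ⟨hne, hs'.isPreconnected⟩ hs⟩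

theorem exists_pairwise_disjoint_Icc_iUnion_eq_runHull {κ : Type*} [LinearOrder κ]
    [WellFoundedLT κ] {A B : Set α} (hA : A.Finite) (C : κ → Set α)
    (hC : ∀ m, (C m).OrdConnected) (hAC : A ⊆ ⋃ m, C m) (hCB : ∀ m, Disjoint (C m) B) :
    ∃ l u : κ → α, Pairwise (Disjoint on fun m => Icc (l m) (u m)) ∧
      ⋃ m, Icc (l m) (u m) = ⋃ a ∈ A, runHull A B a := by
  classical
  have hrun : ∀ m, ∀ a ∈ A ∩ C m, ∀ a' ∈ A ∩ C m, runHull A B a = runHull A B a' :=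
    fun m a ha a' ha' => runHull_eq_runHull ha.1 ha'.1
      ((hCB m).mono_left ((hC m).uIcc_subset ha.2 ha'.2))
  let s : κ → Set α := fun m => if h : (A ∩ C m).Nonempty then runHull A B h.some else ∅
  have hs : ∀ m, s m = ∅ ∨ ∃ a ∈ A, s m = runHull A B a := fun m => by
    by_cases h : (A ∩ C m).Nonempty
    · exact Or.inr ⟨h.some, h.some_mem.1, dif_pos h⟩
    · exact Or.inl (dif_neg h)
  obtain ⟨s', hs's, hdisj, hunion⟩ := exists_pairwise_disjoint_iUnion_eq_of_eq_or_disjoint s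
    fun m m' => by
      rcases hs m with h | ⟨a, ha, h⟩
      · exact Or.inr (h ▸ empty_disjoint _)
      rcases hs m' with h' | ⟨a', ha', h'⟩
      · exact Or.inr (h' ▸ disjoint_empty _)
      · exact h ▸ h' ▸ runHull_eq_or_disjoint ha ha'
  have hscpt : ∀ m, IsCompact (s m) ∧ (s m).OrdConnected := fun m => by
    rcases hs m with h | ⟨a, -, h⟩ <;> rw [h]
    exacts [⟨isCompact_empty, ordConnected_empty⟩, ⟨isCompact_runHull hA, ordConnected_runHull⟩]
  have hIcc : ∀ m, ∃ l u, s' m = Icc l u := fun m => by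
    obtain ⟨hcpt, hconn⟩ : IsCompact (s' m) ∧ (s' m).OrdConnected := by
      rcases hs's m with h | h <;> rw [h]
      exacts [⟨isCompact_empty, ordConnected_empty⟩, hscpt m]
    exact exists_eq_Icc_of_isCompact_of_ordConnected hcpt hconn
  choose l u hlu using hIcc
  refine ⟨l, u, fun m m' hmm' => by simpa only [onFun, hlu] using hdisj hmm', ?_⟩
  simp_rw [← hlu, hunion]
  refine subset_antisymm (iUnion_subset fun m => ?_) (iUnion₂_subset fun a ha => ?_)
  · rcases hs m with h | ⟨a, ha, h⟩
    · exact h ▸ empty_subset _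
    · exact h ▸ subset_biUnion_of_mem ha
  · obtain ⟨m, hm⟩ := mem_iUnion.1 (hAC ha)
    have h : (A ∩ C m).Nonempty := ⟨a, ha, hm⟩
    rw [hrun m a ⟨ha, hm⟩ h.some h.some_mem]
    exact subset_iUnion_of_subset m (show s m = runHull A B h.some from dif_pos h).ge

end OrderTopology

theorem exists_pairwise_disjoint_Icc_of_ordConnected_levelSets {ι : Type*} [LinearOrder ι]
    [Finite ι] {k : ℕ} {S : Set ℝ} (h : ℝ → ℝ) (X : ι → ℝ) (hXS : ∀ i, X i ∈ S)
    (hmono : StrictMono fun i => h (X i))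
    (hlev : ∀ i, ∃ C : Fin k → Set ℝ, (∀ m, (C m).OrdConnected) ∧
      {x ∈ S | h (X i) ≤ h x} = ⋃ m, C m) :
    ∃ l u : ι → Fin k → ℝ, (∀ i, Pairwise (Disjoint on fun m => Icc (l i m) (u i m))) ∧
      (∀ i j, X j ∈ ⋃ m, Icc (l i m) (u i m) ↔ i ≤ j) ∧
      Antitone fun i => ⋃ m, Icc (l i m) (u i m) := by
  have hinj : Injective X := hmono.injective.of_comp
  have key : ∀ i, ∃ l u : Fin k → ℝ, Pairwise (Disjoint on fun m => Icc (l m) (u m)) ∧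
      ⋃ m, Icc (l m) (u m) = ⋃ a ∈ X '' Ici i, runHull (X '' Ici i) (X '' Iio i) a := fun i => by
    obtain ⟨C, hC, hCeq⟩ := hlev i
    refine exists_pairwise_disjoint_Icc_iUnion_eq_runHull (toFinite _) C hC ?_ fun m => ?_
    · rintro _ ⟨j, hij, rfl⟩
      exact hCeq ▸ ⟨hXS j, hmono.monotone hij⟩
    · refine disjoint_left.2 ?_
      rintro _ hx ⟨j, hji, rfl⟩
      have hx' : X j ∈ {x ∈ S | h (X i) ≤ h x} := hCeq ▸ mem_iUnion.2 ⟨m, hx⟩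
      exact (hmono hji).not_ge hx'.2
  choose l u hdisj hunion using key
  refine ⟨l, u, hdisj, fun i j => ?_, fun i j hij => ?_⟩
  · rw [hunion, mem_biUnion_runHull_iff ((disjoint_image_iff hinj).2 (Iio_disjoint_Ici le_rfl).symm)
      ((le_or_gt i j).imp (mem_image_of_mem X) (mem_image_of_mem X)), hinj.mem_set_image, mem_Ici]
  · simp only [hunion]
    exact biUnion_runHull_mono (image_mono (Ici_subset_Ici.2 hij)) (image_mono (Iio_subset_Iio hij))

section StackHeight

variable {α : Type*} [PseudoMetricSpace α] {n : ℕ} (U : Fin (n + 1) → Set α) (M : ℝ)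

noncomputable def stackHeight (x : α) : ℝ :=
  Finset.univ.sup' Finset.univ_nonempty fun i : Fin (n + 1) => (i : ℝ) + 1 - M * infDist x (U i)

theorem continuous_stackHeight : Continuous (stackHeight U M) :=
  Continuous.finset_sup'_apply _ fun _ _ =>
    continuous_const.sub (continuous_const.mul (continuous_infDist_pt _))

variable {U M}

theorem le_stackHeight_iff {c : ℝ} {x : α} :
    c ≤ stackHeight U M x ↔ ∃ i : Fin (n + 1), c + M * infDist x (U i) ≤ i + 1 := by
  simp only [stackHeight, Finset.le_sup'_iff, Finset.mem_univ, true_and, le_sub_iff_add_le]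

theorem stackHeight_eq_of_mem (hM : 0 ≤ M) {j : Fin (n + 1)} {x : α} (hx : x ∈ U j)
    (hfar : ∀ i, j < i → (n : ℝ) + 1 < M * infDist x (U i)) :
    stackHeight U M x = j + 1 := by
  refine le_antisymm (Finset.sup'_le _ _ fun i _ => ?_)
    (le_stackHeight_iff.2 ⟨j, by simp [infDist_zero_of_mem hx]⟩)
  have hdist : 0 ≤ M * infDist x (U i) := mul_nonneg hM infDist_nonneg
  rcases le_or_gt i j with hij | hji
  · have : (i : ℝ) ≤ j := by exact_mod_cast hij
    linarith
  · have : (i : ℝ) ≤ n := by exact_mod_cast Fin.is_le i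
    linarith [hfar i hji, (j.val.cast_nonneg : (0 : ℝ) ≤ j)]

end StackHeight

theorem infDist_le_iff_of_isClosed {α : Type*} [PseudoMetricSpace α] [ProperSpace α] {E : Set α}
    (hE : IsClosed E) (hne : E.Nonempty) {x : α} {r : ℝ} :
    infDist x E ≤ r ↔ ∃ y ∈ E, dist x y ≤ r := by
  refine ⟨fun h => ?_, fun ⟨y, hy, h⟩ => (infDist_le_dist_of_mem hy).trans h⟩
  obtain ⟨y, hy, hxy⟩ := hE.exists_infDist_eq_dist hne x
  exact ⟨y, hy, hxy ▸ h⟩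

theorem Real.exists_mem_Icc_dist_le_iff {l u x r : ℝ} :
    (∃ y ∈ Icc l u, dist x y ≤ r) ↔ 0 ≤ r ∧ l ≤ u ∧ x ∈ Icc (l - r) (u + r) := by
  constructor
  · rintro ⟨y, ⟨hly, hyu⟩, hxy⟩
    rw [Real.dist_eq, abs_le] at hxy
    exact ⟨by linarith, hly.trans hyu, by linarith, by linarith⟩
  · rintro ⟨hr, hlu, hlx, hxu⟩
    refine ⟨max l (min x u), ⟨le_max_left _ _, max_le hlu (min_le_right _ _)⟩, ?_⟩
    rw [Real.dist_eq, abs_le]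
    constructor <;> grind

theorem Real.infDist_iUnion_Icc_le_iff {ι : Type*} [Finite ι] {l u : ι → ℝ}
    (hne : (⋃ m, Icc (l m) (u m)).Nonempty) {x r : ℝ} :
    infDist x (⋃ m, Icc (l m) (u m)) ≤ r ↔
      0 ≤ r ∧ ∃ m, l m ≤ u m ∧ x ∈ Icc (l m - r) (u m + r) := by
  calc infDist x (⋃ m, Icc (l m) (u m)) ≤ r ↔ ∃ m, ∃ y ∈ Icc (l m) (u m), dist x y ≤ r := by
        rw [infDist_le_iff_of_isClosed (isClosed_iUnion_of_finite fun _ => isClosed_Icc) hne]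
        simp only [mem_iUnion]
        exact ⟨fun ⟨y, ⟨m, hy⟩, h⟩ => ⟨m, y, hy, h⟩, fun ⟨m, y, hy, h⟩ => ⟨y, ⟨m, hy⟩, h⟩⟩
    _ ↔ _ := by simp only [Real.exists_mem_Icc_dist_le_iff, exists_and_left]

theorem exists_ordConnected_iUnion_eq_setOf_le_stackHeight {n k : ℕ} {U : Fin (n + 1) → Set ℝ}
    {M : ℝ} (l u : Fin (n + 1) → Fin k → ℝ) (hU : ∀ i, U i = ⋃ m, Icc (l i m) (u i m))
    (hne : ∀ i, (U i).Nonempty) (hanti : Antitone U) (hM : 0 < M) (x' : ℝ) :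
    ∃ C : Fin k → Set ℝ, (∀ m, (C m).OrdConnected) ∧
      {x | stackHeight U M x' ≤ stackHeight U M x} = ⋃ m, C m := by
  set c := stackHeight U M x'
  set r : Fin (n + 1) → ℝ := fun i => (i + 1 - c) / M
  have hlevel : ∀ x, c ≤ stackHeight U M x ↔
      ∃ i m, 0 ≤ r i ∧ l i m ≤ u i m ∧ x ∈ Icc (l i m - r i) (u i m + r i) := fun x => by
    refine le_stackHeight_iff.trans (exists_congr fun i => ?_)
    rw [← le_sub_iff_add_le', mul_comm, ← le_div_iff₀ hM, hU i,
      Real.infDist_iUnion_Icc_le_iff (hU i ▸ hne i), exists_and_left]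
  obtain ⟨i, -, hi, -⟩ := (hlevel x').1 le_rfl
  obtain ⟨i₀, hi₀, hmin⟩ := wellFounded_lt.has_min {i | 0 ≤ r i} ⟨i, hi⟩
  let T : {p : Fin (n + 1) × Fin k // 0 ≤ r p.1 ∧ l p.1 p.2 ≤ u p.1 p.2} → Set ℝ :=
    fun p => Icc (l p.1.1 p.1.2 - r p.1.1) (u p.1.1 p.1.2 + r p.1.1)
  -- every widened interval of a layer `U i` contains its left end, which lies in `U i₀`
  have hmeet : ∀ p, ∃ m, (T p ∩ Icc (l i₀ m) (u i₀ m)).Nonempty := by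
    rintro ⟨⟨i, m⟩, hr, hlu⟩
    have : l i m ∈ U i₀ :=
      hanti (not_lt.1 (hmin i hr)) (hU i ▸ mem_iUnion.2 ⟨m, left_mem_Icc.2 hlu⟩)
    obtain ⟨m', hm'⟩ := mem_iUnion.1 (hU i₀ ▸ this)
    exact ⟨m', l i m, ⟨by linarith, by linarith⟩, hm'⟩
  have hsub : ⋃ m, Icc (l i₀ m) (u i₀ m) ⊆ ⋃ p, T p := by
    have hr₀ : 0 ≤ r i₀ := hi₀
    refine iUnion_subset fun m x hx => mem_iUnion.2 ⟨⟨(i₀, m), hr₀, hx.1.trans hx.2⟩, ?_⟩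
    exact ⟨by linarith [hx.1], by linarith [hx.2]⟩
  obtain ⟨C, hC, hCeq⟩ := exists_ordConnected_iUnion_eq_of_inter_nonempty T _
    (fun _ => ordConnected_Icc) (fun _ => ordConnected_Icc) hmeet hsub
  refine ⟨C, hC, ?_⟩
  ext x
  simp only [mem_ofPred_eq, hlevel, hCeq, mem_iUnion, T, Subtype.exists, Prod.exists, exists_prop,
    and_assoc]

theorem exists_continuous_strictMono_of_antitone_iUnion_Icc {n k : ℕ} (X : Fin (n + 1) → ℝ)
    (l u : Fin (n + 1) → Fin k → ℝ) (hmem : ∀ i j, X j ∈ ⋃ m, Icc (l i m) (u i m) ↔ i ≤ j)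
    (hanti : Antitone fun i => ⋃ m, Icc (l i m) (u i m)) :
    ∃ h : ℝ → ℝ, Continuous h ∧ StrictMono (fun i => h (X i)) ∧
      ∀ x', ∃ C : Fin k → Set ℝ, (∀ m, (C m).OrdConnected) ∧ {x | h x' ≤ h x} = ⋃ m, C m := by
  set U := fun i => ⋃ m, Icc (l i m) (u i m)
  have hne : ∀ i, (U i).Nonempty := fun i => ⟨X i, (hmem i i).2 le_rfl⟩
  have hpos : ∀ i j, j < i → 0 < infDist (X j) (U i) := fun i j hji =>
    ((isClosed_iUnion_of_finite fun _ => isClosed_Icc).notMem_iff_infDist_pos (hne i)).1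
      ((hmem i j).not.2 hji.not_ge)
  -- steep enough that the `i`-th term of `stackHeight` is negative at every `X j` with `j < i`
  obtain ⟨M, hM, hfar⟩ :
      ∃ M : ℝ, 0 < M ∧ ∀ i j, j < i → (n : ℝ) + 1 < M * infDist (X j) (U i) := by
    refine ((eventually_gt_atTop 0).and
      (eventually_all.2 fun i => eventually_all.2 fun j => ?_)).exists
    by_cases hji : j < i
    · exact ((tendsto_id.atTop_mul_const (hpos i j hji)).eventually_gt_atTop _).mono
        fun _ hM _ => hM
    · exact Eventually.of_forall fun _ h => absurd h hji
  refine ⟨stackHeight U M, continuous_stackHeight U M, fun i j hij => ?_,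
    exists_ordConnected_iUnion_eq_setOf_le_stackHeight l u (fun _ => rfl) hne hanti hM⟩
  show stackHeight U M (X i) < stackHeight U M (X j)
  rw [stackHeight_eq_of_mem hM.le ((hmem i i).2 le_rfl) fun i' => hfar i' i,
    stackHeight_eq_of_mem hM.le ((hmem j j).2 le_rfl) fun i' => hfar i' j]
  simpa using hij

theorem convex_ranking_overlaying_classifiers_general
    {t k : ℕ} {Xset : Set ℝ}
    (hXconv : Convex ℝ Xset) (f : ℝ → ℝ)
    (X : Fin (t + 1) → ℝ) (hX : ∀ i, X i ∈ Xset)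
    (hord : StrictMono fun i => f (X i)) :
    (∃ h : ℝ → ℝ, ContinuousOn h Xset ∧
      (∀ i j : Fin (t + 1), Real.sign (h (X i) - h (X j)) = Real.sign (f (X i) - f (X j))) ∧
      (∀ x' ∈ Xset, ∃ C : Fin k → Set ℝ, (∀ m, Convex ℝ (C m)) ∧
        {x ∈ Xset | h x' ≤ h x} = ⋃ m, C m))
    ↔ ∃ l u : Fin (t + 1) → Fin k → ℝ,
        (∀ i j : Fin (t + 1),
          (∑ m : Fin k, if l i m ≤ X j ∧ X j ≤ u i m then (1 : ℝ) else 0)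
            = if i ≤ j then 1 else 0) ∧
        (∀ i j : Fin (t + 1), i ≤ j → ∀ x : ℝ,
          (∑ m : Fin k, if l j m ≤ x ∧ x ≤ u j m then (1 : ℝ) else 0)
            ≤ ∑ m : Fin k, if l i m ≤ x ∧ x ≤ u i m then (1 : ℝ) else 0) := by
  constructor
  · rintro ⟨h, -, hsign, hlev⟩
    obtain ⟨l, u, hdisj, hmem, hanti⟩ :=
      exists_pairwise_disjoint_Icc_of_ordConnected_levelSets h X hX
        (strictMono_of_sign_sub_eq hord hsign) fun i =>
          let ⟨C, hC, hCeq⟩ := hlev (X i) (hX i)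
          ⟨C, fun m => (hC m).ordConnected, hCeq⟩
    refine ⟨l, u, fun i j => ?_, fun i j hij x => ?_⟩
    · classical
      simp [sum_ite_mem_Icc_eq_indicator (hdisj i), indicator_apply, hmem]
    · rw [sum_ite_mem_Icc_eq_indicator (hdisj i), sum_ite_mem_Icc_eq_indicator (hdisj j)]
      exact indicator_le_indicator_of_subset (hanti hij) (fun _ => zero_le_one) x
  · rintro ⟨l, u, hcount, hnested⟩
    obtain ⟨h, hcont, hmono, hlev⟩ := exists_continuous_strictMono_of_antitone_iUnion_Icc X l u
      (fun i j => by rw [← sum_ite_mem_Icc_pos_iff, hcount]; split_ifs <;> simp [*])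
      fun i j hij x hx => sum_ite_mem_Icc_pos_iff.1
        ((sum_ite_mem_Icc_pos_iff.2 hx).trans_le (hnested i j hij x))
    refine ⟨h, hcont.continuousOn, sign_sub_eq_of_strictMono hmono hord, fun x' _ => ?_⟩
    obtain ⟨C, hC, hCeq⟩ := hlev x'
    refine ⟨fun m => Xset ∩ C m, fun m => hXconv.inter (hC m).convex, ?_⟩
    rw [← inter_iUnion, ← hCeq]
    rfl

/-- **Overlaying classifiers** (Proposition 20 of the paper, dimension one): a sample with
pairwise distinct values can be perfectly ranked by a convex ranking rule of degree `k`
iff there exists a nested sequence of classifiers, each a union of `k` intervals, which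
interpolates the sample. -/
theorem convex_ranking_overlaying_classifiers
    {t k : ℕ} (hk : 1 ≤ k) {Xset : Set ℝ} (hXcomp : IsCompact Xset)
    (hXconv : Convex ℝ Xset) (f : ℝ → ℝ)
    (X : Fin (t + 1) → ℝ) (hX : ∀ i, X i ∈ Xset)
    (hord : StrictMono fun i => f (X i)) :
    (∃ h : ℝ → ℝ, ContinuousOn h Xset ∧
      (∀ i j : Fin (t + 1), Real.sign (h (X i) - h (X j)) = Real.sign (f (X i) - f (X j))) ∧
      (∀ x' ∈ Xset, ∃ C : Fin k → Set ℝ, (∀ m, Convex ℝ (C m)) ∧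
        {x ∈ Xset | h x' ≤ h x} = ⋃ m, C m))
    ↔ ∃ l u : Fin (t + 1) → Fin k → ℝ,
        (∀ i j : Fin (t + 1),
          (∑ m : Fin k, if l i m ≤ X j ∧ X j ≤ u i m then (1 : ℝ) else 0)
            = if i ≤ j then 1 else 0) ∧
        (∀ i j : Fin (t + 1), i ≤ j → ∀ x : ℝ,
          (∑ m : Fin k, if l j m ≤ x ∧ x ≤ u j m then (1 : ℝ) else 0)
            ≤ ∑ m : Fin k, if l i m ≤ x ∧ x ≤ u i m then (1 : ℝ) else 0) :=
  convex_ranking_overlaying_classifiers_general hXconv f X hX hord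
end

section
/- Let X ⊂ ℝ^d be compact convex and let (X_1, f(X_1)), …, (X_{t+1}, f(X_{t+1})) be a sample with pairwise distinct values, ordered so that f(X_{(1)}) < ⋯ < f(X_{(t+1)}). Then there exists a continuous function h : X → ℝ with sgn(h(X_i)−h(X_j)) = sgn(f(X_i)−f(X_j)) for all i, j and with all upper level sets {x ∈ X : h(x) ≥ h(x')} convex, if and only if for every i ∈ {1,…,t} the polyhedral set {λ ∈ ℝ^i : M_i λ = X_{(t+1−i)}ᵀ, ⟨1,λ⟩ = 1, λ ⪰ 0} is empty, where M_i is the d×i matrix whose j-th column is X_{(t+2−j)}ᵀ; equivalently, X_{(k)} ∉ ConvHull{X_{(k+1)}, …, X_{(t+1)}} for every k ∈ {1,…,t}. -/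
open MeasureTheory ProbabilityTheory Set
open scoped ENNReal NNReal BigOperators

/-! Along the sample, a ranking rule compatible with `f` is strictly increasing, so the convex
upper level set of `h` through `X (k+1)` contains `X (k+1), …, X t` and hence their convex hull,
but not `X k`. Conversely, if no `X k` lies in the compact convex set
`C_{k+1} = conv {X (k+1), …, X t}`, a concave (hence level-set-convex) ranking function is built
from the top down: subtracting a large multiple of the convex function `infDist · C_{k+1}` pushes
the value at `X k` below all later values without changing them. -/

open Metric

theorem forall_sign_sub_eq_iff_strictMono {ι : Type*} [LinearOrder ι] {u v : ι → ℝ}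
    (hu : StrictMono u) :
    (∀ i j, Real.sign (v i - v j) = Real.sign (u i - u j)) ↔ StrictMono v := by
  constructor
  · intro h i j hij
    have hs := h i j
    rw [Real.sign_of_neg (sub_neg.2 (hu hij))] at hs
    rcases lt_trichotomy (v i) (v j) with hlt | heq | hgt
    · exact hlt
    · rw [heq, sub_self, Real.sign_zero] at hs; norm_num at hs
    · rw [Real.sign_of_pos (sub_pos.2 hgt)] at hs; norm_num at hs
  · intro hv i j
    rcases lt_trichotomy i j with hij | rfl | hij
    · rw [Real.sign_of_neg (sub_neg.2 (hv hij)), Real.sign_of_neg (sub_neg.2 (hu hij))]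
    · simp
    · rw [Real.sign_of_pos (sub_pos.2 (hv hij)), Real.sign_of_pos (sub_pos.2 (hu hij))]

theorem notMem_convexHull_of_strictMono {E ι : Type*} [AddCommGroup E] [Module ℝ E]
    [PartialOrder ι] {x : ι → E} {S : Set E} {g : E → ℝ}
    (hS : ∀ y ∈ S, Convex ℝ {z ∈ S | g y ≤ g z}) (hxS : ∀ i, x i ∈ S)
    (hmono : StrictMono (g ∘ x)) {i j : ι} (hij : i < j) :
    x i ∉ convexHull ℝ (x '' Ici j) := by
  intro hmem
  have hsub : x '' Ici j ⊆ {z ∈ S | g (x j) ≤ g z} := by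
    rintro _ ⟨k, hk, rfl⟩
    exact ⟨hxS k, hmono.monotone hk⟩
  exact (hmono hij).not_ge (convexHull_min hsub (hS _ (hxS j)) hmem).2

theorem Convex.convexOn_infDist {E : Type*} [SeminormedAddCommGroup E] [NormedSpace ℝ E]
    {C : Set E} (hC : Convex ℝ C) : ConvexOn ℝ univ (infDist · C) := by
  refine ⟨convex_univ, fun x _ y _ a b ha hb hab => ?_⟩
  rcases C.eq_empty_or_nonempty with rfl | hne
  · simp
  refine le_of_forall_pos_le_add fun ε hε => ?_
  obtain ⟨u, hu, hxu⟩ := (infDist_lt_iff hne).1 (lt_add_of_pos_right (infDist x C) hε)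
  obtain ⟨v, hv, hyv⟩ := (infDist_lt_iff hne).1 (lt_add_of_pos_right (infDist y C) hε)
  calc infDist (a • x + b • y) C ≤ dist (a • x + b • y) (a • u + b • v) :=
        infDist_le_dist_of_mem (hC hu hv ha hb hab)
    _ ≤ a * dist x u + b * dist y v := by
        refine (dist_add_add_le _ _ _ _).trans_eq ?_
        rw [dist_smul₀, dist_smul₀, Real.norm_of_nonneg ha, Real.norm_of_nonneg hb]
    _ ≤ a * (infDist x C + ε) + b * (infDist y C + ε) := by gcongr
    _ = a • infDist x C + b • infDist y C + ε := by
        simp only [smul_eq_mul]; linear_combination ε * hab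

section ConcaveRanking

variable {E : Type*} [NormedAddCommGroup E] [NormedSpace ℝ E]

theorem ConcaveOn.exists_eqOn_lt_of_notMem {g : E → ℝ} (hgc : ConcaveOn ℝ univ g)
    (hg : Continuous g) {K : Set E} (hKclosed : IsClosed K) (hKconv : Convex ℝ K)
    (hKne : K.Nonempty) {p : E} (hp : p ∉ K) (c : ℝ) :
    ∃ g' : E → ℝ, ConcaveOn ℝ univ g' ∧ Continuous g' ∧ EqOn g' g K ∧ g' p < c := by
  have hd : 0 < infDist p K := (hKclosed.notMem_iff_infDist_pos hKne).1 hp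
  set L := (|g p - c| + 1) / infDist p K
  refine ⟨fun x => g x - L * infDist x K, hgc.sub (hKconv.convexOn_infDist.smul ?_),
    hg.sub (continuous_const.mul (continuous_infDist_pt K)), fun x hx => ?_, ?_⟩
  · positivity
  · simp [infDist_zero_of_mem hx]
  · have hL : L * infDist p K = |g p - c| + 1 := div_mul_cancel₀ _ hd.ne'
    linarith [le_abs_self (g p - c)]

variable {ι : Type*} [LinearOrder ι] {x : ι → E}

theorem exists_concaveOn_strictMonoOn_of_notMem_convexHull
    (hx : ∀ i, x i ∉ convexHull ℝ (x '' Ioi i)) (s : Finset ι) :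
    ∃ g : E → ℝ, ConcaveOn ℝ univ g ∧ Continuous g ∧ StrictMonoOn (g ∘ x) s := by
  induction s using Finset.induction_on_min with
  | empty => exact ⟨0, concaveOn_const 0 convex_univ, continuous_const, by simp [StrictMonoOn]⟩
  | insert a s has ih =>
    obtain ⟨g, hgc, hg, hmono⟩ := ih
    rcases s.eq_empty_or_nonempty with rfl | hne
    · exact ⟨g, hgc, hg, by simp [StrictMonoOn]⟩
    have hK : IsCompact (convexHull ℝ (x '' s)) :=
      (s.finite_toSet.image x).isCompact_convexHull ℝ
    have hxa : x a ∉ convexHull ℝ (x '' s) :=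
      fun h => hx a (convexHull_mono (image_mono fun j hj => has j hj) h)
    obtain ⟨g', hg'c, hg', heq, hlt⟩ := hgc.exists_eqOn_lt_of_notMem hg hK.isClosed
      (convex_convexHull ℝ _) ((hne.to_set.image x).mono (subset_convexHull ℝ _)) hxa
      (s.inf' hne (g ∘ x))
    have hagree : ∀ j ∈ s, g' (x j) = g (x j) :=
      fun j hj => heq (subset_convexHull ℝ _ (mem_image_of_mem x hj))
    refine ⟨g', hg'c, hg', ?_⟩
    rw [Finset.coe_insert, strictMonoOn_insert_iff_of_forall_ge fun j hj => (has j hj).le]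
    refine ⟨fun b hb _ => hlt.trans_le ?_, hmono.congr fun j hj => (hagree j hj).symm⟩
    rw [Function.comp_apply, hagree b hb]
    exact Finset.inf'_le _ hb

theorem exists_concaveOn_strictMono_of_notMem_convexHull [Finite ι]
    (hx : ∀ i, x i ∉ convexHull ℝ (x '' Ioi i)) :
    ∃ g : E → ℝ, ConcaveOn ℝ univ g ∧ Continuous g ∧ StrictMono (g ∘ x) := by
  have := Fintype.ofFinite ι
  obtain ⟨g, hgc, hg, hmono⟩ := exists_concaveOn_strictMonoOn_of_notMem_convexHull hx .univ
  exact ⟨g, hgc, hg, strictMonoOn_univ.1 (by simpa using hmono)⟩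

end ConcaveRanking

theorem convex_ranking_cascade_polyhedra_general
    {d t : ℕ} {Xset : Set (Euc d)} (hXconv : Convex ℝ Xset)
    (f : Euc d → ℝ) (X : Fin (t + 1) → Euc d) (hX : ∀ i, X i ∈ Xset)
    (hord : StrictMono fun i => f (X i)) :
    (∃ h : Euc d → ℝ, ContinuousOn h Xset ∧
      (∀ i j : Fin (t + 1), Real.sign (h (X i) - h (X j)) = Real.sign (f (X i) - f (X j))) ∧
      (∀ x' ∈ Xset, Convex ℝ {x ∈ Xset | h x' ≤ h x}))
    ↔ ∀ i : Fin t,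
        X i.castSucc ∉ convexHull ℝ (X '' {j : Fin (t + 1) | i.castSucc < j}) := by
  constructor
  · rintro ⟨h, -, hsign, hlev⟩ i
    rw [show {j | i.castSucc < j} = Ici i.succ from Set.ext fun _ => Fin.castSucc_lt_iff_succ_le]
    exact notMem_convexHull_of_strictMono hlev hX
      ((forall_sign_sub_eq_iff_strictMono hord).1 hsign) Fin.castSucc_lt_succ
  · intro hcasc
    have hx : ∀ i, X i ∉ convexHull ℝ (X '' Ioi i) :=
      Fin.lastCases (by simp [← Fin.top_eq_last]) hcasc
    obtain ⟨g, hgc, hg, hmono⟩ := exists_concaveOn_strictMono_of_notMem_convexHull hx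
    exact ⟨g, hg.continuousOn, (forall_sign_sub_eq_iff_strictMono hord).2 hmono,
      fun x' _ => (hgc.subset (subset_univ _) hXconv).convex_ge (g x')⟩

/-- **Proposition 21 of the paper**: a sample with pairwise distinct values can be perfectly
ranked by a ranking rule with convex level sets iff no sample point belongs to the convex hull
of the sample points with strictly larger values. -/
theorem convex_ranking_cascade_polyhedra
    {d t : ℕ} {Xset : Set (Euc d)} (hXcomp : IsCompact Xset) (hXconv : Convex ℝ Xset)
    (f : Euc d → ℝ) (X : Fin (t + 1) → Euc d) (hX : ∀ i, X i ∈ Xset)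
    (hord : StrictMono fun i => f (X i)) :
    (∃ h : Euc d → ℝ, ContinuousOn h Xset ∧
      (∀ i j : Fin (t + 1), Real.sign (h (X i) - h (X j)) = Real.sign (f (X i) - f (X j))) ∧
      (∀ x' ∈ Xset, Convex ℝ {x ∈ Xset | h x' ≤ h x}))
    ↔ ∀ i : Fin t,
        X i.castSucc ∉ convexHull ℝ (X '' {j : Fin (t + 1) | i.castSucc < j}) :=
  convex_ranking_cascade_polyhedra_general hXconv f X hX hord
end

section
/- Let X ⊂ ℝ^d be a compact convex set and let f : X → ℝ be a continuous function with (c_α, α)-regular level sets and unique global maximizer x* ∈ X. Then for every radius r ∈ (0, max_{x∈X} ‖x*−x‖₂), letting S_r = {x ∈ X : ‖x*−x‖₂ = r}, one has the inclusions X ∩ B(x*, (r/c_α)^{1+α}) ⊆ {x ∈ X : f(x) ≥ min_{x_r ∈ S_r} f(x_r)} ⊆ B(x*, c_α · r^{1/(1+α)}). -/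
open MeasureTheory ProbabilityTheory Set
open scoped ENNReal NNReal BigOperators

/-!
Let `m = f xr` be the least value of `f` on the sphere of radius `r` about `xs`. Along a segment
ending at the maximizer `xs`, `f` takes every value between its value at the other end and
`f xs`, and the points of the segment are no farther from `xs` than that end. If `x` is close to
`xs` but `f x < m`, the segment from `x` to `xs` contains a point of level `m` strictly closer to
`xs` than `x`, which regularity (compared with `xr`) forbids. If `f x ≥ m`, then `x` shares its
level with a point of the segment from `xr` to `xs`, within distance `r` of `xs`, and regularity
bounds `dist xs x`.
-/

section Segment

variable {E : Type*} [NormedAddCommGroup E] [NormedSpace ℝ E]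

theorem exists_mem_segment_apply_eq {f : E → ℝ} {a b : E}
    (hf : ContinuousOn f (segment ℝ a b)) {v : ℝ} (hv : v ∈ Icc (f a) (f b)) :
    ∃ z ∈ segment ℝ a b, f z = v :=
  (convex_segment a b).isPreconnected.intermediate_value (left_mem_segment ℝ a b)
    (right_mem_segment ℝ a b) hf hv

theorem dist_le_of_mem_segment_right {a b z : E} (hz : z ∈ segment ℝ a b) :
    dist z b ≤ dist a b := by
  linarith [dist_add_dist_of_mem_segment hz, dist_nonneg (x := a) (y := z)]

theorem dist_lt_of_mem_segment_right {a b z : E} (hz : z ∈ segment ℝ a b) (hza : z ≠ a) :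
    dist z b < dist a b := by
  linarith [dist_add_dist_of_mem_segment hz, dist_pos.2 hza.symm]

theorem Convex.exists_mem_dist_eq {s : Set E} (hs : Convex ℝ s) {x y : E} (hx : x ∈ s)
    (hy : y ∈ s) {r : ℝ} (hr : r ∈ Icc 0 (dist x y)) : ∃ z ∈ s, dist x z = r := by
  obtain ⟨z, hz, hzr⟩ := exists_mem_segment_apply_eq (f := dist x) (a := x) (b := y)
    (continuous_const.dist continuous_id).continuousOn (by rwa [dist_self])
  exact ⟨z, hs.segment_subset hx hy hz, hzr⟩

end Segment

namespace RegularLevelSets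

variable {d : ℕ} {X : Set (Euc d)} {f : Euc d → ℝ} {xs : Euc d} {c α : ℝ}

theorem rpow_div_le_dist (hreg : RegularLevelSets X f xs c α) (hc : 0 < c) (hα : 0 ≤ α)
    {x x' : Euc d} (hx : x ∈ X) (hx' : x' ∈ X) (hfx : f x = f x') :
    (dist xs x / c) ^ (1 + α) ≤ dist xs x' := by
  rw [← Real.le_rpow_inv_iff_of_pos (by positivity) dist_nonneg (by linarith), div_le_iff₀' hc,
    ← one_div]
  exact hreg.2.2.2 x hx x' hx' hfx

theorem apply_le_of_dist_le (hreg : RegularLevelSets X f xs c α) (hX : Convex ℝ X)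
    (hf : ContinuousOn f X) (hc : 0 < c) (hα : 0 ≤ α) {x₀ x : Euc d} (hx₀ : x₀ ∈ X)
    (hx : x ∈ X) (hdist : dist x xs ≤ (dist xs x₀ / c) ^ (1 + α)) : f x₀ ≤ f x := by
  by_contra! hlt
  have hseg : segment ℝ x xs ⊆ X := hX.segment_subset hx hreg.1
  obtain ⟨z, hz, hfz⟩ := exists_mem_segment_apply_eq (hf.mono hseg) ⟨hlt.le, hreg.2.1 x₀ hx₀⟩
  have hz_far := hreg.rpow_div_le_dist hc hα hx₀ (hseg hz) hfz.symm
  have hzx : z ≠ x := by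
    rintro rfl
    exact hlt.ne hfz
  have hz_near := dist_lt_of_mem_segment_right hz hzx
  rw [dist_comm] at hz_near
  linarith

theorem dist_le_of_apply_le (hreg : RegularLevelSets X f xs c α) (hX : Convex ℝ X)
    (hf : ContinuousOn f X) (hc : 0 ≤ c) (hα : 0 ≤ α) {x₀ x : Euc d} (hx₀ : x₀ ∈ X)
    (hx : x ∈ X) (hfx : f x₀ ≤ f x) : dist x xs ≤ c * dist xs x₀ ^ ((1 : ℝ) / (1 + α)) := by
  have hseg : segment ℝ x₀ xs ⊆ X := hX.segment_subset hx₀ hreg.1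
  obtain ⟨z, hz, hfz⟩ := exists_mem_segment_apply_eq (hf.mono hseg) ⟨hfx, hreg.2.1 x hx⟩
  have hz_near : dist xs z ≤ dist xs x₀ := by
    rw [dist_comm, dist_comm xs]
    exact dist_le_of_mem_segment_right hz
  calc dist x xs = dist xs x := dist_comm _ _
    _ ≤ c * dist xs z ^ ((1 : ℝ) / (1 + α)) := hreg.2.2.2 x hx z (hseg hz) hfz.symm
    _ ≤ c * dist xs x₀ ^ ((1 : ℝ) / (1 + α)) := by
      have : (0 : ℝ) ≤ 1 / (1 + α) := by positivity
      gcongr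

end RegularLevelSets

/-- **Lemma 5 of the paper**: inclusions between balls and level sets for a continuous function
with `(c, α)`-regular level sets. -/
theorem regular_level_set_inclusions
    {d : ℕ} {Xset : Set (Euc d)} (hXcomp : IsCompact Xset) (hXconv : Convex ℝ Xset)
    {f : Euc d → ℝ} (hf : ContinuousOn f Xset)
    {xs : Euc d} {c α : ℝ} (hc : 0 < c) (hα : 0 ≤ α)
    (hreg : RegularLevelSets Xset f xs c α)
    {r : ℝ} (hr0 : 0 < r) (hrmax : ∃ x ∈ Xset, r < dist xs x) :
    Xset ∩ Metric.closedBall xs ((r / c) ^ (1 + α))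
        ⊆ {x ∈ Xset | sInf (f '' {x ∈ Xset | dist xs x = r}) ≤ f x} ∧
      {x ∈ Xset | sInf (f '' {x ∈ Xset | dist xs x = r}) ≤ f x}
        ⊆ Metric.closedBall xs (c * r ^ ((1 : ℝ) / (1 + α))) := by
  obtain ⟨x₁, hx₁, hr_lt⟩ := hrmax
  have hS : IsCompact {x ∈ Xset | dist xs x = r} :=
    hXcomp.inter_right (isClosed_eq (continuous_const.dist continuous_id) continuous_const)
  have hS_ne : {x ∈ Xset | dist xs x = r}.Nonempty :=
    hXconv.exists_mem_dist_eq hreg.1 hx₁ ⟨hr0.le, hr_lt.le⟩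
  obtain ⟨xr, ⟨hxr, rfl⟩, hmin⟩ := hS.exists_sInf_image_eq hS_ne (hf.mono fun _ h ↦ h.1)
  rw [hmin]
  refine ⟨fun x ⟨hx, hx_ball⟩ ↦ ⟨hx, ?_⟩, fun x ⟨hx, hfx⟩ ↦ ?_⟩
  · exact hreg.apply_le_of_dist_le hXconv hf hc hα hxr hx hx_ball
  · exact hreg.dist_le_of_apply_le hXconv hf hc.le hα hxr hx hfx
end

section
/- Let X ⊂ ℝ^d be a compact convex set with nonempty interior, let f : X → ℝ have a continuous induced ranking rule, and let (X*_1, …, X*_n) be a Pure Adaptive Search for f on X. Then for every u ∈ [0,1], P(μ(X*^n)/μ(X) ≤ u) ≤ P(∏_{i=1}^n U_i ≤ u), where X*^n = {x ∈ X : f(x) ≥ f(X*_n)} and U_1, …, U_n are independent random variables uniformly distributed on [0,1]. -/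
open MeasureTheory ProbabilityTheory Set
open scoped ENNReal NNReal BigOperators

/-! Write `V(z) = μ{x ∈ X | f z ≤ f x}`. A set on which `V ≤ c` has measure at most `c`: exhaust
it by the superlevel sets of a minimizing sequence of `f`. Hence if `Z` is uniform on a superlevel
set `L`, then `P(V(Z) ≤ c) ≤ P(μ(L) U ≤ c)` for `U` uniform on `[0,1]`. As `X*_{t+1}` is uniform
on a superlevel set of measure `V(X*_t)`, Tonelli turns this into
`P(V(X*_{t+1}) ≤ c) ≤ ∫₀¹ P(V(X*_t) ≤ c / r) dr`, the recursion satisfied by the distribution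
function of `U₁ ⋯ U_t`. Only the ranking of `f` enters, so `f` may be replaced by a continuous
extension of its ranking representative, which makes `V` measurable. -/

lemma Real.sign_nonpos_iff {r : ℝ} : Real.sign r ≤ 0 ↔ r ≤ 0 := by
  rcases lt_trichotomy r 0 with h | rfl | h
  · simp [Real.sign_of_neg h, h.le]
  · simp
  · simp [Real.sign_of_pos h, not_le.mpr h]

lemma le_iff_le_of_sign_sub_eq {a b a' b' : ℝ} (h : Real.sign (a - b) = Real.sign (a' - b')) :
    a ≤ b ↔ a' ≤ b' := by
  rw [← sub_nonpos, ← Real.sign_nonpos_iff, h, Real.sign_nonpos_iff, sub_nonpos]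

lemma HasContinuousRanking.exists_continuous_le_iff_le {d : ℕ} {S : Set (Euc d)}
    {f : Euc d → ℝ} (hf : HasContinuousRanking S f) (hS : IsClosed S) :
    ∃ H : Euc d → ℝ, Continuous H ∧ ∀ z ∈ S, ∀ x ∈ S, f z ≤ f x ↔ H z ≤ H x := by
  obtain ⟨h, hh, hsign⟩ := hf
  obtain ⟨H, hHh⟩ := ContinuousMap.exists_restrict_eq hS ⟨_, hh.domRestrict⟩
  have hH_eq (x : Euc d) (hx : x ∈ S) : H x = h x := ContinuousMap.congr_fun hHh ⟨x, hx⟩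
  refine ⟨H, H.continuous, fun z hz x hx => ?_⟩
  rw [hH_eq z hz, hH_eq x hx]
  exact le_iff_le_of_sign_sub_eq (hsign z hz x hx)

lemma sep_le_eq_of_le_iff_le {α : Type*} {S : Set α} {f g : α → ℝ}
    (hfg : ∀ z ∈ S, ∀ x ∈ S, f z ≤ f x ↔ g z ≤ g x) {z : α} (hz : z ∈ S) :
    {x ∈ S | f z ≤ f x} = {x ∈ S | g z ≤ g x} := by
  ext x
  exact and_congr_right (hfg z hz x)

lemma measure_le_of_forall_measure_superlevel_le {α : Type*} [MeasurableSpace α]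
    (μ : Measure α) {S A : Set α} {H : α → ℝ} {c : ℝ≥0∞} (hAS : A ⊆ S)
    (hbdd : BddBelow (H '' A)) (hA : ∀ y ∈ A, μ {x ∈ S | H y ≤ H x} ≤ c) : μ A ≤ c := by
  rcases A.eq_empty_or_nonempty with rfl | hne
  · simp
  set m := sInf (H '' A)
  have hm : ∀ y ∈ A, m ≤ H y := fun y hy => csInf_le hbdd ⟨y, hy, rfl⟩
  by_cases hmin : m ∈ H '' A
  · obtain ⟨y₀, hy₀, hHy₀⟩ := hmin
    have hsub : A ⊆ {x ∈ S | H y₀ ≤ H x} := fun y hy => ⟨hAS hy, hHy₀ ▸ hm y hy⟩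
    exact (measure_mono hsub).trans (hA y₀ hy₀)
  have hlt : ∀ y ∈ A, m < H y := fun y hy =>
    (hm y hy).lt_of_ne fun h => hmin ⟨y, hy, h.symm⟩
  obtain ⟨u, hu_anti, hu_lim, hu_mem⟩ := exists_seq_tendsto_sInf (hne.image H) hbdd
  have hcover : A ⊆ ⋃ k, {x ∈ S | u k ≤ H x} := by
    intro y hy
    have hy' : H y ∈ ⋃ k, Ici (u k) := by
      rw [iUnion_Ici_eq_Ioi_of_lt_of_tendsto
        (fun k => by obtain ⟨z, hz, hzu⟩ := hu_mem k; exact hzu ▸ hlt z hz) hu_lim]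
      exact hlt y hy
    obtain ⟨k, hk⟩ := mem_iUnion.1 hy'
    exact mem_iUnion.2 ⟨k, hAS hy, hk⟩
  have hmono : Monotone fun k => {x ∈ S | u k ≤ H x} :=
    fun j k hjk x hx => ⟨hx.1, (hu_anti hjk).trans hx.2⟩
  calc μ A ≤ μ (⋃ k, {x ∈ S | u k ≤ H x}) := measure_mono hcover
    _ = ⨆ k, μ {x ∈ S | u k ≤ H x} := hmono.measure_iUnion
    _ ≤ c := iSup_le fun k => by
      obtain ⟨y, hy, hyu⟩ := hu_mem k
      exact hyu ▸ hA y hy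

lemma inv_mul_le_restrict_Icc_setOf_mul_le {a m c : ℝ≥0∞} (ha : a ≠ ∞) (hmc : m ≤ c)
    (hma : m ≤ a) : a⁻¹ * m ≤ volume.restrict (Icc (0 : ℝ) 1) {r | a * ENNReal.ofReal r ≤ c} := by
  rcases eq_or_ne a 0 with rfl | ha0
  · simp [nonpos_iff_eq_zero.1 hma]
  have hle1 : a⁻¹ * m ≤ 1 := by
    calc a⁻¹ * m ≤ a⁻¹ * a := by gcongr
      _ = 1 := ENNReal.inv_mul_cancel ha0 ha
  have hfin : a⁻¹ * m ≠ ∞ := ne_top_of_le_ne_top ENNReal.one_ne_top hle1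
  have hsub : Icc 0 (a⁻¹ * m).toReal ⊆ {r | a * ENNReal.ofReal r ≤ c} ∩ Icc 0 1 := by
    intro r hr
    refine ⟨?_, hr.1, hr.2.trans (ENNReal.toReal_le_of_le_ofReal zero_le_one (by simpa))⟩
    calc a * ENNReal.ofReal r ≤ a * (a⁻¹ * m) := by
          gcongr; exact ENNReal.ofReal_le_of_le_toReal hr.2
      _ = m := by rw [← mul_assoc, ENNReal.mul_inv_cancel ha0 ha, one_mul]
      _ ≤ c := hmc
  calc a⁻¹ * m = volume (Icc 0 (a⁻¹ * m).toReal) := by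
        rw [Real.volume_Icc, sub_zero, ENNReal.ofReal_toReal hfin]
    _ ≤ volume ({r | a * ENNReal.ofReal r ≤ c} ∩ Icc 0 1) := measure_mono hsub
    _ ≤ _ := Measure.le_restrict_apply _ _

section SuperlevelVolume

variable {E : Type*} [MeasureSpace E]

def superlevelVolume (S : Set E) (H : E → ℝ) (z : E) : ℝ≥0∞ :=
  volume {x ∈ S | H z ≤ H x}

lemma measurable_superlevelVolume (S : Set E) {H : E → ℝ} (hH : Measurable H) :
    Measurable (superlevelVolume S H) := by
  have hanti : Antitone fun t : ℝ => volume {x ∈ S | t ≤ H x} :=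
    fun _ _ hst => measure_mono fun _ hx => ⟨hx.1, hst.trans hx.2⟩
  exact hanti.measurable.comp hH

lemma unifOn_setOf_superlevelVolume_le {S B : Set E} {H : E → ℝ} (hH : Measurable H)
    (hbdd : BddBelow (H '' S)) (hB : B ⊆ S) (hBfin : volume B ≠ ∞) (c : ℝ≥0∞) :
    unifOn B {z | superlevelVolume S H z ≤ c}
      ≤ volume.restrict (Icc (0 : ℝ) 1) {r | volume B * ENNReal.ofReal r ≤ c} := by
  have hmeas : MeasurableSet {z | superlevelVolume S H z ≤ c} :=
    measurableSet_le (measurable_superlevelVolume S hH) measurable_const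
  rw [unifOn, Measure.smul_apply, smul_eq_mul, Measure.restrict_apply hmeas]
  refine inv_mul_le_restrict_Icc_setOf_mul_le hBfin ?_ (measure_mono inter_subset_right)
  exact measure_le_of_forall_measure_superlevel_le volume (inter_subset_right.trans hB)
    (hbdd.mono (image_mono (inter_subset_right.trans hB))) fun _ hy => hy.1

end SuperlevelVolume

noncomputable def uniformProdCDF (k : ℕ) (s : ℝ≥0∞) : ℝ≥0∞ :=
  (Measure.pi fun _ : Fin k => volume.restrict (Icc (0 : ℝ) 1))
    {v | ENNReal.ofReal (∏ i, v i) ≤ s}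

lemma uniformProdCDF_ofReal (k : ℕ) {u : ℝ} (hu : 0 ≤ u) :
    uniformProdCDF k (ENNReal.ofReal u)
      = (Measure.pi fun _ : Fin k => volume.restrict (Icc (0 : ℝ) 1)) {v | ∏ i, v i ≤ u} := by
  simp only [uniformProdCDF, ENNReal.ofReal_le_ofReal_iff hu]

lemma ae_restrict_Icc_zero_one_pos : ∀ᵐ r ∂(volume.restrict (Icc (0 : ℝ) 1)), 0 < r := by
  rw [Measure.restrict_congr_set Ioc_ae_eq_Icc.symm]
  exact (ae_restrict_mem measurableSet_Ioc).mono fun _ hr => hr.1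

lemma restrict_Icc_setOf_mul_le_le_uniformProdCDF_one {a : ℝ≥0∞} (ha0 : a ≠ 0) (ha : a ≠ ∞)
    (c : ℝ≥0∞) :
    volume.restrict (Icc (0 : ℝ) 1) {r | a * ENNReal.ofReal r ≤ c}
      ≤ uniformProdCDF 1 (c / a) := by
  have hmp := measurePreserving_funUnique (volume.restrict (Icc (0 : ℝ) 1)) (Fin 1)
  have hmeas : MeasurableSet {r : ℝ | ENNReal.ofReal r ≤ c / a} :=
    measurableSet_le ENNReal.measurable_ofReal measurable_const
  have hsub : {r | a * ENNReal.ofReal r ≤ c} ⊆ {r | ENNReal.ofReal r ≤ c / a} := fun r hr =>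
    (ENNReal.le_div_iff_mul_le (.inl ha0) (.inl ha)).2 (by rwa [mul_comm])
  refine (measure_mono hsub).trans ?_
  rw [← hmp.measure_preimage hmeas.nullMeasurableSet, uniformProdCDF]
  refine measure_mono fun v hv => ?_
  simpa [Fin.prod_univ_one] using hv

lemma lintegral_uniformProdCDF_div_le (k : ℕ) (s : ℝ≥0∞) :
    ∫⁻ r in Icc (0 : ℝ) 1, uniformProdCDF k (s / ENNReal.ofReal r)
      ≤ uniformProdCDF (k + 1) s := by
  set ν := volume.restrict (Icc (0 : ℝ) 1)
  set U : Set (ℝ × (Fin k → ℝ)) := {p | ENNReal.ofReal (p.1 * ∏ i, p.2 i) ≤ s}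
  have hU : MeasurableSet U := by
    refine measurableSet_le (ENNReal.measurable_ofReal.comp ?_) measurable_const
    exact measurable_fst.mul
      (Finset.measurable_prod _ fun i _ => (measurable_pi_apply i).comp measurable_snd)
  have hsplit : uniformProdCDF (k + 1) s = (ν.prod (Measure.pi fun _ : Fin k => ν)) U := by
    rw [← (measurePreserving_piFinSuccAbove (fun _ : Fin (k + 1) => ν) 0).measure_preimage
      hU.nullMeasurableSet, uniformProdCDF]
    congr 1
    ext v
    simp [U, MeasurableEquiv.piFinSuccAbove, Fin.insertNthEquiv, Fin.tail,
      Fin.prod_univ_succAbove (fun i => v i) 0]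
  rw [hsplit, Measure.prod_apply hU]
  refine lintegral_mono_ae ?_
  filter_upwards [ae_restrict_mem measurableSet_Icc] with r hr
  refine measure_mono fun w (hw : ENNReal.ofReal (∏ i, w i) ≤ s / ENNReal.ofReal r) => ?_
  show ENNReal.ofReal (r * ∏ i, w i) ≤ s
  calc ENNReal.ofReal (r * ∏ i, w i) = ENNReal.ofReal r * ENNReal.ofReal (∏ i, w i) :=
        ENNReal.ofReal_mul hr.1
    _ ≤ ENNReal.ofReal r * (s / ENNReal.ofReal r) := by gcongr
    _ ≤ s := ENNReal.mul_div_le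

lemma lintegral_restrict_Icc_setOf_mul_le_le {Ω : Type*} [MeasurableSpace Ω] {P : Measure Ω}
    [SFinite P] {W : Ω → ℝ≥0∞} (hW : Measurable W) {k : ℕ} {v : ℝ≥0∞}
    (hcdf : ∀ c, P {ω | W ω ≤ c} ≤ uniformProdCDF k (c / v)) (c : ℝ≥0∞) :
    ∫⁻ ω, volume.restrict (Icc (0 : ℝ) 1) {r | W ω * ENNReal.ofReal r ≤ c} ∂P
      ≤ uniformProdCDF (k + 1) (c / v) := by
  have hmeas : MeasurableSet {p : Ω × ℝ | W p.1 * ENNReal.ofReal p.2 ≤ c} :=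
    measurableSet_le ((hW.comp measurable_fst).mul
      (ENNReal.measurable_ofReal.comp measurable_snd)) measurable_const
  have htonelli : ∫⁻ ω, volume.restrict (Icc (0 : ℝ) 1) {r | W ω * ENNReal.ofReal r ≤ c} ∂P
      = ∫⁻ r in Icc (0 : ℝ) 1, P {ω | W ω * ENNReal.ofReal r ≤ c} :=
    (Measure.prod_apply hmeas).symm.trans (Measure.prod_apply_symm hmeas)
  rw [htonelli]
  refine (lintegral_mono_ae ?_).trans (lintegral_uniformProdCDF_div_le k (c / v))
  filter_upwards [ae_restrict_Icc_zero_one_pos] with r hr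
  have hsub : {ω | W ω * ENNReal.ofReal r ≤ c} ⊆ {ω | W ω ≤ c / ENNReal.ofReal r} :=
    fun ω hω => (ENNReal.le_div_iff_mul_le (.inl (ENNReal.ofReal_pos.2 hr).ne')
      (.inl ENNReal.ofReal_ne_top)).2 hω
  calc P {ω | W ω * ENNReal.ofReal r ≤ c} ≤ P {ω | W ω ≤ c / ENNReal.ofReal r} := measure_mono hsub
    _ ≤ uniformProdCDF k (c / ENNReal.ofReal r / v) := hcdf _
    _ = uniformProdCDF k (c / v / ENNReal.ofReal r) := by rw [ENNReal.div_right_comm]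

lemma measure_preimage_eq_lintegral_condDistrib {Ω α β : Type*} [MeasurableSpace Ω]
    [MeasurableSpace α] [MeasurableSpace β] [StandardBorelSpace β] [Nonempty β]
    {P : Measure Ω} [IsFiniteMeasure P] {Y : Ω → α} {Z : Ω → β} (hY : Measurable Y)
    (hZ : AEMeasurable Z P) {s : Set β} (hs : MeasurableSet s) :
    P (Z ⁻¹' s) = ∫⁻ ω, condDistrib Z Y P (Y ω) s ∂P := by
  simpa using (setLIntegral_preimage_condDistrib hY hZ hs MeasurableSet.univ).symm

lemma unifOn_eq_zero_of_disjoint {E : Type*} [MeasureSpace E] {B s : Set E}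
    (hs : MeasurableSet s) (hsB : Disjoint s B) : unifOn B s = 0 := by
  simp [unifOn, Measure.restrict_apply hs, hsB.inter_eq]

namespace IsPureAdaptiveSearch

variable {d : ℕ} {Ω : Type*} [MeasurableSpace Ω] {P : Measure Ω} [IsFiniteMeasure P]
  {S : Set (Euc d)} {f : Euc d → ℝ} {n : ℕ} {X : Fin n → Ω → Euc d}

lemma measure_preimage_succ (hpas : IsPureAdaptiveSearch P S f n X) {t : ℕ} (ht : t + 1 < n)
    {s : Set (Euc d)} (hs : MeasurableSet s) :
    P (X ⟨t + 1, ht⟩ ⁻¹' s)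
      = ∫⁻ ω, unifOn {x ∈ S | f (X ⟨t, by omega⟩ ω) ≤ f x} s ∂P := by
  rw [measure_preimage_eq_lintegral_condDistrib (hpas.1 _) (hpas.1 _).aemeasurable hs]
  refine lintegral_congr_ae ?_
  filter_upwards [hpas.2.2 t ht] with ω hω
  rw [hω]

lemma ae_mem (hpas : IsPureAdaptiveSearch P S f n X) (hS : MeasurableSet S) {t : ℕ}
    (ht : t < n) : ∀ᵐ ω ∂P, X ⟨t, ht⟩ ω ∈ S := by
  change P (X ⟨t, ht⟩ ⁻¹' Sᶜ) = 0
  cases t with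
  | zero =>
    rw [← Measure.map_apply (hpas.1 _) hS.compl, hpas.2.1 ht]
    exact unifOn_eq_zero_of_disjoint hS.compl disjoint_compl_left
  | succ t =>
    rw [hpas.measure_preimage_succ ht hS.compl]
    refine lintegral_eq_zero_of_ae_eq_zero (ae_of_all _ fun ω => ?_)
    exact unifOn_eq_zero_of_disjoint hS.compl
      (disjoint_compl_left.mono_right (sep_subset _ _))

lemma of_le_iff_le (hpas : IsPureAdaptiveSearch P S f n X) (hS : MeasurableSet S)
    {g : Euc d → ℝ} (hfg : ∀ z ∈ S, ∀ x ∈ S, f z ≤ f x ↔ g z ≤ g x) :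
    IsPureAdaptiveSearch P S g n X := by
  refine ⟨hpas.1, hpas.2.1, fun t ht => ?_⟩
  filter_upwards [hpas.2.2 t ht, hpas.ae_mem hS (by omega : t < n)] with ω hω hmem
  rw [hω, sep_le_eq_of_le_iff_le hfg hmem]

lemma measure_superlevelVolume_le (hpas : IsPureAdaptiveSearch P S f n X)
    (hf : Measurable f) (hbdd : BddBelow (f '' S)) (hS0 : volume S ≠ 0) (hS : volume S ≠ ∞)
    {t : ℕ} (ht : t < n) (c : ℝ≥0∞) :
    P {ω | superlevelVolume S f (X ⟨t, ht⟩ ω) ≤ c} ≤ uniformProdCDF (t + 1) (c / volume S) := by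
  have hmeas (c : ℝ≥0∞) : MeasurableSet {z | superlevelVolume S f z ≤ c} :=
    measurableSet_le (measurable_superlevelVolume S hf) measurable_const
  induction t generalizing c with
  | zero =>
    calc P {ω | superlevelVolume S f (X ⟨0, ht⟩ ω) ≤ c}
        = unifOn S {z | superlevelVolume S f z ≤ c} := by
          rw [← hpas.2.1 ht, Measure.map_apply (hpas.1 _) (hmeas c)]; rfl
      _ ≤ volume.restrict (Icc (0 : ℝ) 1) {r | volume S * ENNReal.ofReal r ≤ c} :=
          unifOn_setOf_superlevelVolume_le hf hbdd subset_rfl hS c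
      _ ≤ uniformProdCDF 1 (c / volume S) :=
          restrict_Icc_setOf_mul_le_le_uniformProdCDF_one hS0 hS c
  | succ t ih =>
    have hW : Measurable fun ω => superlevelVolume S f (X ⟨t, by omega⟩ ω) :=
      (measurable_superlevelVolume S hf).comp (hpas.1 _)
    calc P {ω | superlevelVolume S f (X ⟨t + 1, ht⟩ ω) ≤ c}
        = ∫⁻ ω, unifOn {x ∈ S | f (X ⟨t, by omega⟩ ω) ≤ f x}
            {z | superlevelVolume S f z ≤ c} ∂P := hpas.measure_preimage_succ ht (hmeas c)
      _ ≤ ∫⁻ ω, volume.restrict (Icc (0 : ℝ) 1)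
            {r | superlevelVolume S f (X ⟨t, by omega⟩ ω) * ENNReal.ofReal r ≤ c} ∂P :=
          lintegral_mono fun ω => unifOn_setOf_superlevelVolume_le hf hbdd (sep_subset _ _)
            (ne_top_of_le_ne_top hS (measure_mono (sep_subset _ _))) c
      _ ≤ uniformProdCDF (t + 1 + 1) (c / volume S) :=
          lintegral_restrict_Icc_setOf_mul_le_le hW (ih (by omega)) c

end IsPureAdaptiveSearch

/-- **Lemma 24 of the paper**: the normalized volume of the level set of the last value of a
Pure Adaptive Search is stochastically larger than a product of `n` independent uniforms. -/
theorem pas_level_set_volume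
    {d : ℕ} {Xset : Set (Euc d)} (hXcomp : IsCompact Xset)
    (hXint : (interior Xset).Nonempty)
    {f : Euc d → ℝ} (hf : HasContinuousRanking Xset f)
    {Ω : Type*} [MeasurableSpace Ω] {P : Measure Ω} [IsProbabilityMeasure P]
    {n : ℕ} (hn : 0 < n) {X : Fin n → Ω → Euc d}
    (hpas : IsPureAdaptiveSearch P Xset f n X)
    {u : ℝ} (hu : u ∈ Set.Icc (0 : ℝ) 1) :
    P {ω | volume {x ∈ Xset | f (X ⟨n - 1, by omega⟩ ω) ≤ f x} / volume Xset
        ≤ ENNReal.ofReal u}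
      ≤ (Measure.pi fun _ : Fin n => volume.restrict (Set.Icc (0 : ℝ) 1))
          {v | ∏ i : Fin n, v i ≤ u} := by
  obtain ⟨H, hH, hfH⟩ := hf.exists_continuous_le_iff_le hXcomp.isClosed
  have hXmeas : MeasurableSet Xset := hXcomp.isClosed.measurableSet
  have hX0 : volume Xset ≠ 0 :=
    ((isOpen_interior.measure_pos volume hXint).trans_le (measure_mono interior_subset)).ne'
  have hXfin : volume Xset ≠ ∞ := hXcomp.measure_lt_top.ne
  have hlast : n - 1 < n := by omega
  have hevent : {ω | volume {x ∈ Xset | f (X ⟨n - 1, hlast⟩ ω) ≤ f x} / volume Xset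
        ≤ ENNReal.ofReal u}
      =ᵐ[P] {ω | superlevelVolume Xset H (X ⟨n - 1, hlast⟩ ω)
          ≤ ENNReal.ofReal u * volume Xset} := by
    filter_upwards [hpas.ae_mem hXmeas hlast] with ω hω
    change (_ ≤ _) = (_ ≤ _)
    rw [sep_le_eq_of_le_iff_le hfH hω, superlevelVolume, ENNReal.div_le_iff hX0 hXfin]
  have hbound := (hpas.of_le_iff_le hXmeas hfH).measure_superlevelVolume_le hH.measurable
    (hXcomp.image hH).bddBelow hX0 hXfin hlast (ENNReal.ofReal u * volume Xset)
  rwa [Nat.sub_add_cancel hn, ENNReal.mul_div_cancel_right hX0 hXfin,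
    uniformProdCDF_ofReal n hu.1, ← measure_congr hevent] at hbound
end

section
/- Let U_1, …, U_n be independent random variables uniformly distributed on [0,1]. Then for every δ ∈ (0,1), P(∏_{i=1}^n U_i < δ · exp(−n − √(2n·ln(1/δ)))) < δ. -/
open MeasureTheory ProbabilityTheory Set
open scoped ENNReal NNReal BigOperators

/-! Chernoff bound: for `0 ≤ λ < 1`, Markov's inequality for `∏ Uᵢ ^ (-λ)`, whose mean is
`(1 - λ)⁻ⁿ`, gives `P(∏ Uᵢ < t) ≤ t ^ λ (1 - λ)⁻ⁿ`. Write `L = ln (1/δ)` and `s = √(2nL)`;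
at `t = δ e^{-n-s} = e^{-(n+s+L)}` the choice `λ = (s + L)/(n + s + L)` turns the bound into
`δ e^{-s} (1 + (s + L)/n)ⁿ`, which is `< δ` because
`1 + (s + L)/n = 1 + s/n + (s/n)²/2 < e^{s/n}`. -/

theorem lintegral_Ioc_rpow_neg {l : ℝ} (hl : l < 1) :
    ∫⁻ x in Ioc (0 : ℝ) 1, ENNReal.ofReal (x ^ (-l)) = ENNReal.ofReal (1 / (1 - l)) := by
  have hint : IntegrableOn (fun x : ℝ => x ^ (-l)) (Ioc 0 1) := by
    simpa [intervalIntegrable_iff, uIoc_of_le zero_le_one] using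
      intervalIntegral.intervalIntegrable_rpow' (a := 0) (b := 1) (by linarith : -1 < -l)
  rw [← ofReal_integral_eq_lintegral_ofReal hint
    ((ae_restrict_mem measurableSet_Ioc).mono fun x hx => Real.rpow_nonneg hx.1.le _),
    ← intervalIntegral.integral_of_le zero_le_one, integral_rpow (Or.inl (by linarith)),
    Real.one_rpow, Real.zero_rpow (by linarith)]
  congr 1
  ring

section ProductChernoff

variable {ι : Type*} [Fintype ι]

theorem lintegral_pi_prod_eq_pow {E : Type*} [MeasurableSpace E] (μ : Measure E)
    [IsProbabilityMeasure μ] {g : E → ℝ≥0∞} (hg : Measurable g) :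
    ∫⁻ v, ∏ i, g (v i) ∂Measure.pi (fun _ : ι => μ) = (∫⁻ x, g x ∂μ) ^ Fintype.card ι := by
  rw [lintegral_prod_eq_prod_lintegral_of_indepFun _ _
    (iIndepFun_pi fun _ => hg.aemeasurable) fun i => hg.comp (measurable_pi_apply i)]
  have hcoord (i : ι) : ∫⁻ v, g (v i) ∂Measure.pi (fun _ : ι => μ) = ∫⁻ x, g x ∂μ :=
    (measurePreserving_eval _ i).lintegral_comp hg
  simp only [hcoord, Finset.prod_const, Finset.card_univ]

theorem one_le_rpow_mul_prod_rpow_neg {v : ι → ℝ} (hv : ∀ i, 0 < v i) {l t : ℝ} (hl : 0 ≤ l)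
    (hvt : ∏ i, v i < t) : 1 ≤ t ^ l * ∏ i, v i ^ (-l) := by
  have hprod : 0 < ∏ i, v i := Finset.prod_pos fun i _ => hv i
  have ht : 0 < t := hprod.trans hvt
  rw [Real.finsetProd_rpow _ _ fun i _ => (hv i).le]
  calc (1 : ℝ) = t ^ l * t ^ (-l) := by
        rw [Real.rpow_neg ht.le, mul_inv_cancel₀ (Real.rpow_pos_of_pos ht l).ne']
    _ ≤ t ^ l * (∏ i, v i) ^ (-l) :=
        mul_le_mul_of_nonneg_left (Real.rpow_le_rpow_of_nonpos hprod hvt.le (neg_nonpos.2 hl))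
          (Real.rpow_nonneg ht.le l)

theorem measure_pi_prod_lt_le (μ : Measure ℝ) [IsProbabilityMeasure μ]
    (hμ : ∀ᵐ x ∂μ, 0 < x) {l : ℝ} (hl : 0 ≤ l) (t : ℝ) :
    Measure.pi (fun _ : ι => μ) {v | ∏ i, v i < t}
      ≤ ENNReal.ofReal (t ^ l) * (∫⁻ x, ENNReal.ofReal (x ^ (-l)) ∂μ) ^ Fintype.card ι := by
  have hG : Measurable fun x : ℝ => ENNReal.ofReal (x ^ (-l)) := by fun_prop
  have hpos : ∀ᵐ v ∂Measure.pi (fun _ : ι => μ), ∀ i, 0 < v i :=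
    ae_all_iff.2 fun i => Measure.tendsto_eval_ae_ae.eventually hμ
  rw [← lintegral_pi_prod_eq_pow μ hG, ← lintegral_const_mul _ (by fun_prop),
    ← lintegral_indicator_one (measurableSet_lt (by fun_prop) measurable_const)]
  refine lintegral_mono_ae (hpos.mono fun v hv => ?_)
  by_cases hvt : ∏ i, v i < t
  · have ht : 0 < t := (Finset.prod_pos fun i _ => hv i).trans hvt
    rw [indicator_of_mem (show v ∈ {v : ι → ℝ | ∏ i, v i < t} from hvt), Pi.one_apply,
      ← ENNReal.ofReal_prod_of_nonneg fun i _ => Real.rpow_nonneg (hv i).le _,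
      ← ENNReal.ofReal_mul (Real.rpow_nonneg ht.le l)]
    exact ENNReal.one_le_ofReal.2 (one_le_rpow_mul_prod_rpow_neg hv hl hvt)
  · rw [indicator_of_notMem (show v ∉ {v : ι → ℝ | ∏ i, v i < t} from hvt)]
    exact zero_le

theorem measure_pi_Ioc_prod_lt_le {l : ℝ} (hl0 : 0 ≤ l) (hl1 : l < 1) (t : ℝ) :
    Measure.pi (fun _ : ι => volume.restrict (Ioc (0 : ℝ) 1)) {v | ∏ i, v i < t}
      ≤ ENNReal.ofReal (t ^ l * (1 / (1 - l)) ^ Fintype.card ι) := by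
  have : IsProbabilityMeasure (volume.restrict (Ioc (0 : ℝ) 1)) := ⟨by simp⟩
  have hpos : ∀ᵐ x ∂volume.restrict (Ioc (0 : ℝ) 1), 0 < x :=
    (ae_restrict_mem measurableSet_Ioc).mono fun x hx => hx.1
  rw [ENNReal.ofReal_mul' (pow_nonneg (by rw [one_div_nonneg]; linarith) _),
    ENNReal.ofReal_pow (by rw [one_div_nonneg]; linarith), ← lintegral_Ioc_rpow_neg hl1]
  exact measure_pi_prod_lt_le _ hpos hl0 t

end ProductChernoff

theorem quadratic_lt_exp_of_pos {x : ℝ} (hx : 0 < x) : 1 + x + x ^ 2 / 2 < Real.exp x := by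
  have h := Real.quadratic_le_exp_of_nonneg (half_pos hx).le
  calc 1 + x + x ^ 2 / 2 < (1 + x / 2 + (x / 2) ^ 2 / 2) ^ 2 := by
        nlinarith [pow_pos hx 3, pow_pos hx 4]
    _ ≤ Real.exp (x / 2) ^ 2 := by gcongr
    _ = Real.exp x := by rw [← Real.exp_nat_mul]; ring_nf

theorem one_add_div_pow_lt_exp {n : ℕ} (hn : 0 < n) {s L : ℝ} (hs : 0 < s)
    (hsL : s ^ 2 = 2 * n * L) : (1 + (s + L) / n) ^ n < Real.exp s := by
  have hn' : (0 : ℝ) < n := by exact_mod_cast hn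
  have hquad : 1 + (s + L) / n = 1 + s / n + (s / n) ^ 2 / 2 := by
    field_simp
    linear_combination (-1) * hsL
  calc (1 + (s + L) / n) ^ n < Real.exp (s / n) ^ n := by
        rw [hquad]
        gcongr
        exact quadratic_lt_exp_of_pos (by positivity)
    _ = Real.exp s := by rw [← Real.exp_nat_mul, mul_div_cancel₀ _ hn'.ne']

/-- **Lemma 25 of the paper**: concentration of products of independent uniforms on `[0,1]`:
`P(∏ U_i < δ e^{-n - √(2n ln(1/δ))}) < δ`. -/
theorem product_uniform_concentration (n : ℕ) {δ : ℝ} (hδ : δ ∈ Set.Ioo (0 : ℝ) 1) :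
    (Measure.pi fun _ : Fin n => volume.restrict (Set.Icc (0 : ℝ) 1))
        {v | ∏ i : Fin n, v i
          < δ * Real.exp (-(n : ℝ) - Real.sqrt (2 * n * Real.log (1 / δ)))}
      < ENNReal.ofReal δ := by
  obtain ⟨hδ0, hδ1⟩ := hδ
  rcases n.eq_zero_or_pos with rfl | hn
  · simp [hδ1.le.not_gt, hδ0]
  set L := Real.log (1 / δ)
  set s := √(2 * n * L)
  have hn' : (0 : ℝ) < n := by exact_mod_cast hn
  have hL : 0 < L := Real.log_pos (one_lt_one_div hδ0 hδ1)
  have hs : 0 < s := Real.sqrt_pos.2 (by positivity)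
  have hδL : δ = Real.exp (-L) := by
    simp only [L, one_div, Real.log_inv, neg_neg, Real.exp_log hδ0]
  set l := (s + L) / (n + s + L)
  have hl0 : 0 ≤ l := by positivity
  have hl1 : l < 1 := (div_lt_one (by positivity)).2 (by linarith)
  have hthreshold : (δ * Real.exp (-n - s)) ^ l = Real.exp (-(s + L)) := by
    rw [hδL, ← Real.exp_add, ← Real.exp_mul]
    congr 1
    simp only [l]
    field_simp
    ring
  have hratio : 1 / (1 - l) = 1 + (s + L) / n := by
    rw [one_div, inv_eq_iff_eq_inv, eq_comm]
    simp only [l]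
    field_simp
    ring
  rw [Measure.restrict_congr_set Ioc_ae_eq_Icc.symm]
  calc _ ≤ ENNReal.ofReal ((δ * Real.exp (-n - s)) ^ l * (1 / (1 - l)) ^ n) := by
        simpa using measure_pi_Ioc_prod_lt_le (ι := Fin n) hl0 hl1 _
    _ < ENNReal.ofReal δ := by
        rw [ENNReal.ofReal_lt_ofReal_iff hδ0, hthreshold, hratio, hδL, neg_add_rev, Real.exp_add,
          mul_assoc]
        refine mul_lt_of_lt_one_right (Real.exp_pos _) ?_
        rw [Real.exp_neg, inv_mul_lt_iff₀ (Real.exp_pos _), mul_one]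
        exact one_add_div_pow_lt_exp hn hs (Real.sq_sqrt (by positivity))
end

section
/- Let X ⊂ ℝ^d be a compact convex set with nonempty interior, let f : X → ℝ have a continuous induced ranking rule and attain its maximum on X, and let (X_1, …, X_n) be a RankOpt-type process for f on X. Then for every ε > 0, P(max_{1≤i≤n} f(X_i) < max_{x∈X} f(x) − ε) ≤ (1 − μ(X_ε)/μ(X))^n, where X_ε = {x ∈ X : f(x) ≥ max_{x'∈X} f(x') − ε}. -/
open MeasureTheory ProbabilityTheory Set
open scoped ENNReal NNReal BigOperators

/-! Conditionally on a history lying entirely below the level `f xM - ε`, the next point of a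
RankOpt-type process is uniform on a set `A ⊆ X` containing `X_ε`, so it misses `X_ε` with
probability `μ(A \ X_ε)/μ(A) = 1 - μ(X_ε)/μ(A) ≤ 1 - μ(X_ε)/μ(X)`; disintegrating along the
history step by step multiplies these bounds. `X_ε` is measurable because, on `X`, it is the
preimage of an upper set of `ℝ` under the continuous function inducing the ranking. -/

lemma measurableSet_sep_le_of_continuousOn {α : Type*} [TopologicalSpace α] [MeasurableSpace α]
    [OpensMeasurableSpace α] {s : Set α} (hs : MeasurableSet s) {f h : α → ℝ}
    (hh : ContinuousOn h s) (hmono : ∀ x ∈ s, ∀ y ∈ s, h x ≤ h y → f x ≤ f y) (a : ℝ) :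
    MeasurableSet {x ∈ s | a ≤ f x} := by
  classical
  set U : Set ℝ := (upperClosure (h '' {x ∈ s | a ≤ f x}) : Set ℝ)
  have hU : MeasurableSet U := (upperClosure _).upper.ordConnected.measurableSet
  have hpre : {x ∈ s | a ≤ f x} = s ∩ s.piecewise h 0 ⁻¹' U := by
    ext x
    simp only [mem_ofPred_eq, mem_inter_iff, mem_preimage, U, SetLike.mem_coe, mem_upperClosure,
      mem_image]
    constructor
    · rintro ⟨hx, hax⟩
      exact ⟨hx, _, ⟨x, ⟨hx, hax⟩, rfl⟩, (piecewise_eq_of_mem _ _ _ hx).ge⟩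
    · rintro ⟨hx, _, ⟨y, ⟨hy, hay⟩, rfl⟩, hyx⟩
      rw [piecewise_eq_of_mem _ _ _ hx] at hyx
      exact ⟨hx, hay.trans (hmono y hy x hx hyx)⟩
  rw [hpre]
  exact hs.inter ((hh.measurable_piecewise continuousOn_const hs) hU)

lemma HasContinuousRanking.measurableSet_sep_le {d : ℕ} {Xset : Set (Euc d)} {f : Euc d → ℝ}
    (hf : HasContinuousRanking Xset f) (hX : MeasurableSet Xset) (a : ℝ) :
    MeasurableSet {x ∈ Xset | a ≤ f x} := by
  obtain ⟨h, hh, hsign⟩ := hf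
  refine measurableSet_sep_le_of_continuousOn hX hh (fun x hx y hy hxy => ?_) a
  by_contra! hlt
  have hsgn := hsign x hx y hy
  rw [Real.sign_of_pos (sub_pos.2 hlt)] at hsgn
  rcases (sub_nonpos.2 hxy).lt_or_eq with hneg | hzero
  · rw [Real.sign_of_neg hneg] at hsgn; norm_num at hsgn
  · rw [hzero, Real.sign_zero] at hsgn; norm_num at hsgn

lemma unifOn_apply_eq_zero_of_disjoint {E : Type*} [MeasureSpace E] {A B : Set E}
    (hA : MeasurableSet A) (hBA : Disjoint B A) : unifOn A B = 0 := by
  rw [unifOn, Measure.smul_apply, Measure.restrict_apply' hA, hBA.inter_eq, measure_empty,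
    smul_zero]

lemma unifOn_compl_le {E : Type*} [MeasureSpace E] {s A T : Set E} (hA : MeasurableSet A)
    (hT : NullMeasurableSet T) (hTA : T ⊆ A) (hAs : A ⊆ s) (hs : volume s ≠ ⊤) :
    unifOn A Tᶜ ≤ 1 - volume T / volume s := by
  rcases eq_or_ne (volume A) 0 with h0 | h0
  -- `unifOn A` is the zero measure (`⊤ • 0`) in this case.
  · simp [unifOn, Measure.restrict_eq_zero.2 h0]
  have hAfin : volume A ≠ ⊤ := ne_top_of_le_ne_top hs (measure_mono hAs)
  calc unifOn A Tᶜ = (volume A)⁻¹ * (volume A - volume T) := by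
        rw [unifOn, Measure.smul_apply, Measure.restrict_apply' hA, smul_eq_mul,
          ← sdiff_eq_compl_inter,
          measure_sdiff hTA hT (ne_top_of_le_ne_top hAfin (measure_mono hTA))]
    _ = 1 - volume T / volume A := by
        rw [ENNReal.mul_sub (fun _ _ => ENNReal.inv_ne_top.2 h0), ENNReal.inv_mul_cancel h0 hAfin,
          ENNReal.div_eq_inv_mul]
    _ ≤ 1 - volume T / volume s := by gcongr

namespace IsRankOptProcess

variable {d : ℕ} {Ω : Type*} [MeasurableSpace Ω] {P : Measure Ω} {Xset : Set (Euc d)}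
  {f : Euc d → ℝ} {n : ℕ} {X : Fin n → Ω → Euc d}

lemma measure_inter_le [IsFiniteMeasure P] (hproc : IsRankOptProcess P Xset f n X) {t : ℕ}
    (ht : t + 1 < n) {C : Set (Fin (t + 1) → Euc d)} (hC : MeasurableSet C) {B : Set (Euc d)}
    (hB : MeasurableSet B) {c : ℝ≥0∞}
    (hc : ∀ v ∈ C, ∀ A, MeasurableSet A → {x ∈ Xset | ∀ i, f (v i) ≤ f x} ⊆ A → A ⊆ Xset →
      unifOn A B ≤ c) :
    P ((fun ω i => X (Fin.castLE ht.le i) ω) ⁻¹' C ∩ X ⟨t + 1, ht⟩ ⁻¹' B)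
      ≤ c * P ((fun ω i => X (Fin.castLE ht.le i) ω) ⁻¹' C) := by
  obtain ⟨hXm, -, hstep⟩ := hproc
  have hY : Measurable fun ω i => X (Fin.castLE ht.le i) ω :=
    measurable_pi_lambda _ fun i => hXm _
  rw [← setLIntegral_preimage_condDistrib hY (hXm _).aemeasurable hB hC, ← setLIntegral_const]
  refine setLIntegral_mono_ae' (hY hC) ?_
  filter_upwards [hstep t ht] with ω hω hωC
  obtain ⟨A, hA, -, hlevel, hAX, hκ⟩ := hω
  rw [hκ]
  exact hc _ hωC A hA hlevel hAX

lemma ae_forall_mem [IsFiniteMeasure P] (hproc : IsRankOptProcess P Xset f n X)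
    (hX : MeasurableSet Xset) : ∀ᵐ ω ∂P, ∀ i, X i ω ∈ Xset := by
  rw [ae_all_iff]
  rintro ⟨i, hi⟩
  rw [ae_iff]
  change P (X ⟨i, hi⟩ ⁻¹' Xsetᶜ) = 0
  cases i with
  | zero =>
    rw [← Measure.map_apply (hproc.1 _) hX.compl, hproc.2.1 hi]
    exact unifOn_apply_eq_zero_of_disjoint hX disjoint_compl_left
  | succ t =>
    have := hproc.measure_inter_le hi MeasurableSet.univ hX.compl (c := 0)
      fun v _ A hA _ hAX => (unifOn_apply_eq_zero_of_disjoint hA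
        (disjoint_compl_left.mono_right hAX)).le
    simpa using this

lemma measure_forall_mem_diff_le_pow [IsProbabilityMeasure P]
    (hproc : IsRankOptProcess P Xset f n X) (hX : MeasurableSet Xset) (hXfin : volume Xset ≠ ⊤)
    {T : Set (Euc d)} (hT : MeasurableSet T) (hTX : T ⊆ Xset)
    (hTup : ∀ x ∈ Xset \ T, ∀ y ∈ T, f x ≤ f y) :
    P {ω | ∀ i, X i ω ∈ Xset \ T} ≤ (1 - volume T / volume Xset) ^ n := by
  set S := Xset \ T
  set c := 1 - volume T / volume Xset
  have hS : MeasurableSet S := hX.diff hT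
  have hunif : ∀ A, MeasurableSet A → T ⊆ A → A ⊆ Xset → unifOn A S ≤ c := fun A hA hTA hAX =>
    (measure_mono (sdiff_subset_compl Xset T)).trans
      (unifOn_compl_le hA hT.nullMeasurableSet hTA hAX hXfin)
  have hprefix : ∀ t (ht : t + 1 ≤ n),
      P {ω | ∀ i : Fin (t + 1), X (Fin.castLE ht i) ω ∈ S} ≤ c ^ (t + 1) := by
    intro t
    induction t with
    | zero =>
      intro ht
      have hevent : {ω | ∀ i : Fin 1, X (Fin.castLE ht i) ω ∈ S} = X ⟨0, ht⟩ ⁻¹' S := by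
        ext ω; exact Fin.forall_fin_one
      rw [hevent, ← Measure.map_apply (hproc.1 _) hS, hproc.2.1 ht, zero_add, pow_one]
      exact hunif Xset hX hTX subset_rfl
    | succ t ih =>
      intro ht
      have hevent : {ω | ∀ i : Fin (t + 2), X (Fin.castLE ht i) ω ∈ S} =
          (fun ω i => X (Fin.castLE (Nat.le_of_succ_le ht) i) ω) ⁻¹' {v | ∀ i, v i ∈ S} ∩
            X ⟨t + 1, ht⟩ ⁻¹' S := by
        ext ω
        simp only [mem_ofPred_eq, mem_inter_iff, mem_preimage]
        exact Fin.forall_fin_succ'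
      have hC : MeasurableSet {v : Fin (t + 1) → Euc d | ∀ i, v i ∈ S} := by
        rw [ofPred_forall]
        exact .iInter fun i => measurable_pi_apply i hS
      rw [hevent, pow_succ']
      calc _ ≤ c * P ((fun ω i => X (Fin.castLE (Nat.le_of_succ_le ht) i) ω) ⁻¹'
              {v | ∀ i, v i ∈ S}) :=
            hproc.measure_inter_le ht hC hS fun v hv A hA hlevel hAX =>
              hunif A hA (fun y hy => hlevel ⟨hTX hy, fun i => hTup _ (hv i) y hy⟩) hAX
        _ ≤ c * c ^ (t + 1) := by gcongr; exact ih (Nat.le_of_succ_le ht)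
  cases n with
  | zero => simp
  | succ m => simpa using hprefix m le_rfl

end IsRankOptProcess

theorem rankopt_exploration_bound_general
    {d : ℕ} {Xset : Set (Euc d)} (hXcomp : IsCompact Xset)
    {f : Euc d → ℝ} (hf : HasContinuousRanking Xset f)
    {xM : Euc d}
    {Ω : Type*} [MeasurableSpace Ω] {P : Measure Ω} [IsProbabilityMeasure P]
    {n : ℕ} {X : Fin n → Ω → Euc d}
    (hproc : IsRankOptProcess P Xset f n X)
    {ε : ℝ} :
    P {ω | ∀ i : Fin n, f (X i ω) < f xM - ε}
      ≤ ENNReal.ofReal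
          ((1 - (volume {x ∈ Xset | f xM - ε ≤ f x} / volume Xset).toReal) ^ n) := by
  have hX : MeasurableSet Xset := hXcomp.measurableSet
  set Xε := {x ∈ Xset | f xM - ε ≤ f x}
  have hq : volume Xε / volume Xset ≤ 1 :=
    ENNReal.div_le_of_le_mul (by rw [one_mul]; exact measure_mono fun x hx => hx.1)
  have hrhs : 1 - (volume Xε / volume Xset).toReal = (1 - volume Xε / volume Xset).toReal := by
    rw [ENNReal.toReal_sub_of_le hq ENNReal.one_ne_top, ENNReal.toReal_one]
  rw [hrhs, ← ENNReal.toReal_pow, ENNReal.ofReal_toReal (by finiteness)]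
  calc P {ω | ∀ i, f (X i ω) < f xM - ε} ≤ P {ω | ∀ i, X i ω ∈ Xset \ Xε} := by
        refine measure_mono_ae ?_
        filter_upwards [hproc.ae_forall_mem hX] with ω hω hlt i
        exact ⟨hω i, fun hXε => (hlt i).not_ge hXε.2⟩
    _ ≤ _ := hproc.measure_forall_mem_diff_le_pow hX hXcomp.measure_lt_top.ne
        (hf.measurableSet_sep_le hX _) (fun x hx => hx.1)
        fun x hx y hy => (not_le.1 fun h => hx.2 ⟨hx.1, h⟩).le.trans hy.2

/-- **Key inequality in the consistency proof of RankOpt**: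
`P(max_i f(X_i) < max f - ε) ≤ (1 - μ(X_ε)/μ(X))^n`. -/
theorem rankopt_exploration_bound
    {d : ℕ} {Xset : Set (Euc d)} (hXcomp : IsCompact Xset) (hXconv : Convex ℝ Xset)
    (hXint : (interior Xset).Nonempty)
    {f : Euc d → ℝ} (hf : HasContinuousRanking Xset f)
    {xM : Euc d} (hxM : xM ∈ Xset) (hmax : ∀ x ∈ Xset, f x ≤ f xM)
    {Ω : Type*} [MeasurableSpace Ω] {P : Measure Ω} [IsProbabilityMeasure P]
    {n : ℕ} {X : Fin n → Ω → Euc d}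
    (hproc : IsRankOptProcess P Xset f n X)
    {ε : ℝ} (hε : 0 < ε) :
    P {ω | ∀ i : Fin n, f (X i ω) < f xM - ε}
      ≤ ENNReal.ofReal
          ((1 - (volume {x ∈ Xset | f xM - ε ≤ f x} / volume Xset).toReal) ^ n) :=
  rankopt_exploration_bound_general hXcomp hf hproc
end
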